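/- arXiv:2408.08510 — 5 statements merged into one kernel-verified Lean document; each statement's English description precedes it below -/
import Mathlib

section
/- Let G_0 be a finite simple nonabelian group, identified with the group Inn(G_0) of inner automorphisms inside Aut(G_0), and let G be a group with G_0 ≤ G ≤ Aut(G_0). Suppose that for every maximal solvable subgroup H of Aut(G_0) one has Reg_H(H·G_0, 5) ≥ 5. Then Reg_S(G, 5) ≥ 5 for every solvable subgroup S of G. -/
open Pointwise

/-- The number of regular orbits of `G` on `(G/H)^k`: the number of orbits of the diagonal
action of `G` on `k`-tuples of cosets of `H` whose points have stabiliser equal to the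
normal core `H_G = ⋂_{g ∈ G} g⁻¹Hg` of `H`. -/
noncomputable def numRegOrbits {G : Type*} [Group G] (H : Subgroup G) (k : ℕ) : ℕ :=
  Nat.card {O : Set (Fin k → G ⧸ H) //
    ∃ ω : Fin k → G ⧸ H, MulAction.stabilizer G ω = H.normalCore ∧ O = MulAction.orbit G ω}


section Aux

variable {G₀ : Type*} [Group G₀]

lemma aux_center (hsimple : IsSimpleGroup G₀) (hnonab : ∃ a b : G₀, a * b ≠ b * a) :
    Subgroup.center G₀ = ⊥ := by
  rcases (Subgroup.center G₀).normal_of_characteristic.eq_bot_or_eq_top with h | h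
  · exact h
  · obtain ⟨a, b, hab⟩ := hnonab
    have ha : a ∈ Subgroup.center G₀ := h ▸ Subgroup.mem_top a
    exact absurd ((Subgroup.mem_center_iff.mp ha) b).symm hab

lemma aux_conj_inj (hsimple : IsSimpleGroup G₀) (hnonab : ∃ a b : G₀, a * b ≠ b * a) :
    Function.Injective (MulAut.conj : G₀ →* MulAut G₀) := by
  intro a b hab
  have h : ∀ x, a * x * a⁻¹ = b * x * b⁻¹ := by
    intro x
    have := DFunLike.congr_fun hab x
    simpa [MulAut.conj_apply] using this
  have hc : b⁻¹ * a ∈ Subgroup.center G₀ := by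
    rw [Subgroup.mem_center_iff]
    intro y
    have h1 := h y
    have h2 : b⁻¹ * (a * y * a⁻¹) * a = b⁻¹ * (b * y * b⁻¹) * a := by rw [h1]
    calc y * (b⁻¹ * a) = b⁻¹ * (b * y * b⁻¹) * a := by group
    _ = b⁻¹ * (a * y * a⁻¹) * a := h2.symm
    _ = b⁻¹ * a * y := by group
  rw [aux_center hsimple hnonab, Subgroup.mem_bot] at hc
  have : b = a := by
    have := congrArg (b * ·) hc
    simpa using this.symm
  exact this.symm

lemma aux_conj_conj (φ : MulAut G₀) (g : G₀) :
    φ * MulAut.conj g * φ⁻¹ = MulAut.conj (φ g) := by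
  ext x
  simp only [MulAut.mul_apply, MulAut.conj_apply, map_mul, map_inv]
  congr 1
  congr 1
  exact φ.apply_symm_apply x

lemma aux_I_normal : ((MulAut.conj : G₀ →* MulAut G₀).range).Normal := by
  constructor
  rintro ψ ⟨g, rfl⟩ φ
  exact ⟨φ g, (aux_conj_conj φ g).symm⟩

lemma aux_centralizer (hsimple : IsSimpleGroup G₀) (hnonab : ∃ a b : G₀, a * b ≠ b * a) :
    Subgroup.centralizer ((MulAut.conj : G₀ →* MulAut G₀).range : Set (MulAut G₀)) = ⊥ := by
  rw [Subgroup.eq_bot_iff_forall]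
  intro φ hφ
  have hcomm : ∀ g : G₀, MulAut.conj g * φ = φ * MulAut.conj g := fun g =>
    Subgroup.mem_centralizer_iff.mp hφ (MulAut.conj g) ⟨g, rfl⟩
  have h2 : ∀ g, (MulAut.conj : G₀ →* MulAut G₀) (φ g) = MulAut.conj g := by
    intro g
    rw [← aux_conj_conj φ g, ← hcomm g]
    group
  have h3 : ∀ g, φ g = g := fun g => aux_conj_inj hsimple hnonab (h2 g)
  exact MulEquiv.ext h3

lemma aux_not_solvable (hsimple : IsSimpleGroup G₀) (hnonab : ∃ a b : G₀, a * b ≠ b * a) :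
    ¬ IsSolvable G₀ := by
  intro h
  obtain ⟨a, b, hab⟩ := hnonab
  exact hab (IsSimpleGroup.comm_iff_isSolvable.mpr h a b)

lemma aux_I_simple (hsimple : IsSimpleGroup G₀) (hnonab : ∃ a b : G₀, a * b ≠ b * a) :
    IsSimpleGroup ↥((MulAut.conj : G₀ →* MulAut G₀).range) := by
  have e : G₀ ≃* ↥((MulAut.conj : G₀ →* MulAut G₀).range) :=
    MonoidHom.ofInjective (aux_conj_inj hsimple hnonab)
  haveI : Nontrivial ↥((MulAut.conj : G₀ →* MulAut G₀).range) := by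
    haveI := hsimple.toNontrivial
    exact e.symm.toEquiv.nontrivial
  haveI := hsimple
  exact IsSimpleGroup.isSimpleGroup_of_surjective e.toMonoidHom e.surjective

lemma aux_I_not_solvable (hsimple : IsSimpleGroup G₀) (hnonab : ∃ a b : G₀, a * b ≠ b * a) :
    ¬ IsSolvable ↥((MulAut.conj : G₀ →* MulAut G₀).range) := by
  intro h
  have e : G₀ ≃* ↥((MulAut.conj : G₀ →* MulAut G₀).range) :=
    MonoidHom.ofInjective (aux_conj_inj hsimple hnonab)
  haveI : Group.IsSolvable ↥((MulAut.conj : G₀ →* MulAut G₀).range) := h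
  exact aux_not_solvable hsimple hnonab (solvable_of_solvable_injective (f := e.toMonoidHom) e.injective)

end Aux

section Core
variable {A : Type*} [Group A]

lemma core_eq_bot (I B T : Subgroup A) [hInorm : I.Normal]
    (hcent : Subgroup.centralizer (I : Set A) = ⊥)
    (hsimpleI : IsSimpleGroup ↥I) (hnsolvI : ¬ IsSolvable ↥I)
    (hIB : I ≤ B) (hT : IsSolvable T) :
    (T.subgroupOf B).normalCore = ⊥ := by
  classical
  set N' : Subgroup A := ((T.subgroupOf B).normalCore).map B.subtype with hN'def
  have hN'T : N' ≤ T := by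
    rintro a ⟨a', ha', rfl⟩
    exact Subgroup.mem_subgroupOf.mp (Subgroup.normalCore_le _ ha')
  have hN'conj : ∀ a ∈ N', ∀ b ∈ B, b * a * b⁻¹ ∈ N' := by
    rintro a ⟨a', ha', rfl⟩ b hb
    refine ⟨⟨b, hb⟩ * a' * ⟨b, hb⟩⁻¹,
      (Subgroup.normalCore_normal _).conj_mem a' ha' ⟨b, hb⟩, ?_⟩
    simp
  -- N' ⊓ I = ⊥
  have hJ : N' ⊓ I = ⊥ := by
    have hle : N' ⊓ I ≤ I := inf_le_right
    have hnormal : ((N' ⊓ I).subgroupOf I).Normal := by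
      constructor
      rintro n hn g
      rw [Subgroup.mem_subgroupOf] at hn ⊢
      obtain ⟨hn1, hn2⟩ := hn
      have hcoe : (↑(g * n * g⁻¹) : A) = ↑g * ↑n * (↑g)⁻¹ := by
        simp [mul_assoc]
      rw [hcoe]
      exact ⟨hN'conj _ hn1 _ (hIB g.2), I.mul_mem (I.mul_mem g.2 hn2) (I.inv_mem g.2)⟩
    haveI := hsimpleI
    rcases hnormal.eq_bot_or_eq_top with h1 | h2
    · have := congrArg (Subgroup.map I.subtype) h1
      rwa [Subgroup.subgroupOf_map_subtype, inf_eq_left.mpr hle, Subgroup.map_bot] at this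
    · exfalso
      have hIN : I ≤ T := by
        intro y hy
        have : (⟨y, hy⟩ : ↥I) ∈ (N' ⊓ I).subgroupOf I := h2 ▸ Subgroup.mem_top _
        exact hN'T (Subgroup.mem_subgroupOf.mp this).1
      haveI : Group.IsSolvable T := hT
      have e := Subgroup.subgroupOfEquivOfLe hIN
      exact hnsolvI (solvable_of_surjective (f := e.toMonoidHom) e.surjective)
  -- conclude
  rw [Subgroup.eq_bot_iff_forall]
  intro x hx
  have hxN' : (↑x : A) ∈ N' := ⟨x, hx, rfl⟩
  have hcentx : (↑x : A) ∈ Subgroup.centralizer (I : Set A) := by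
    rw [Subgroup.mem_centralizer_iff]
    intro g hg
    set x' : A := ↑x with hx'
    have hc1 : x' * g * x'⁻¹ * g⁻¹ ∈ N' := by
      have h2 : g * x'⁻¹ * g⁻¹ ∈ N' := hN'conj _ (inv_mem hxN') _ (hIB hg)
      have h3 : x' * (g * x'⁻¹ * g⁻¹) = x' * g * x'⁻¹ * g⁻¹ := by group
      exact h3 ▸ mul_mem hxN' h2
    have hc2 : x' * g * x'⁻¹ * g⁻¹ ∈ I :=
      mul_mem (hInorm.conj_mem g hg x') (inv_mem hg)
    have hmem : x' * g * x'⁻¹ * g⁻¹ ∈ N' ⊓ I := ⟨hc1, hc2⟩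
    rw [hJ, Subgroup.mem_bot] at hmem
    have hxg : x' * g = g * x' := by
      have := congrArg (· * (g * x')) hmem
      simpa [mul_assoc] using this
    exact hxg.symm
  rw [hcent, Subgroup.mem_bot] at hcentx
  exact Subtype.ext hcentx

end Core


section Main
variable {A : Type*} [Group A]

lemma main_generic [Finite A] (I : Subgroup A) [hInorm : I.Normal]
    (hcent : Subgroup.centralizer (I : Set A) = ⊥)
    (hsimpleI : IsSimpleGroup ↥I) (hnsolvI : ¬ IsSolvable ↥I)
    (G : Subgroup A) (hG : I ≤ G)
    (hmax : ∀ H : Subgroup A, IsSolvable H →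
      (∀ K : Subgroup A, IsSolvable K → H ≤ K → H = K) →
      5 ≤ numRegOrbits (H.subgroupOf (H ⊔ I)) 5)
    (S : Subgroup G) (hS : IsSolvable S) :
    5 ≤ numRegOrbits S 5 := by
  classical
  haveI : Finite (Subgroup A) := Finite.of_injective SetLike.coe SetLike.coe_injective
  haveI : Group.IsSolvable S := hS
  have hS' : IsSolvable (S.map G.subtype) :=
    solvable_of_surjective
      (f := (S.equivMapOfInjective G.subtype G.subtype_injective).toMonoidHom)
      (S.equivMapOfInjective G.subtype G.subtype_injective).surjective
  obtain ⟨H, hHs, hmaxH⟩ := Set.Finite.exists_maximalFor id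
    {K : Subgroup A | IsSolvable K ∧ S.map G.subtype ≤ K} (Set.toFinite _)
    ⟨S.map G.subtype, hS', le_rfl⟩
  obtain ⟨hHsolv, hSH⟩ := hHs
  have hHmax : ∀ K : Subgroup A, IsSolvable K → H ≤ K → H = K := fun K hK hHK =>
    le_antisymm hHK (hmaxH ⟨hK, hSH.trans hHK⟩ hHK)
  have h5 := hmax H hHsolv hHmax
  set B := H ⊔ I with hBdef
  have hIB : I ≤ B := le_sup_right
  have hHB : H ≤ B := le_sup_left
  have hcoreH : (H.subgroupOf B).normalCore = ⊥ :=
    core_eq_bot I B H hcent hsimpleI hnsolvI hIB hHsolv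
  have hcoreS : S.normalCore = ⊥ := by
    have h1 : ((S.map G.subtype).subgroupOf G).normalCore = ⊥ :=
      core_eq_bot I G (S.map G.subtype) hcent hsimpleI hnsolvI hG hS'
    rwa [Subgroup.subgroupOf, Subgroup.comap_map_eq_self_of_injective G.subtype_injective] at h1
  -- lifting cosets
  have lift : ∀ ω : Fin 5 → ↥B ⧸ H.subgroupOf B,
      ∃ (ω' : Fin 5 → ↥G ⧸ S) (b : Fin 5 → ↥B) (y : Fin 5 → ↥G),
        (∀ i, QuotientGroup.mk (b i) = ω i) ∧ (∀ i, QuotientGroup.mk (y i) = ω' i) ∧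
        (∀ i, (↑(y i) : A) ∈ I) ∧ (∀ i, ((↑(y i) : A))⁻¹ * ↑(b i) ∈ H) := by
    intro ω
    have hy : ∀ i, ∃ y : ↥G, ((↑y : A) ∈ I) ∧ (↑y : A)⁻¹ * ↑((ω i).out) ∈ H := by
      intro i
      have hmem : (↑((ω i).out) : A) ∈ B := ((ω i).out).2
      have hmem2 : (↑((ω i).out) : A) ∈ ((I : Set A) * (H : Set A)) := by
        rw [← Subgroup.normal_mul, SetLike.mem_coe]
        exact (sup_comm H I) ▸ hmem
      rw [Set.mem_mul] at hmem2
      obtain ⟨z, hzI, h, hh, heq⟩ := hmem2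
      refine ⟨⟨z, hG hzI⟩, hzI, ?_⟩
      have : (z : A)⁻¹ * ↑((ω i).out) = h := by rw [← heq]; group
      rw [this]; exact hh
    choose y hyI hyH using hy
    exact ⟨fun i => QuotientGroup.mk (y i), fun i => (ω i).out, y,
      fun i => QuotientGroup.out_eq' (ω i), fun i => rfl, hyI, hyH⟩
  -- stabilizer transfer
  have stab2 : ∀ (ω : Fin 5 → ↥B ⧸ H.subgroupOf B) (ω' : Fin 5 → ↥G ⧸ S)
      (b : Fin 5 → ↥B) (y : Fin 5 → ↥G),
      (∀ i, QuotientGroup.mk (b i) = ω i) → (∀ i, QuotientGroup.mk (y i) = ω' i) →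
      (∀ i, (↑(y i) : A) ∈ I) → (∀ i, ((↑(y i) : A))⁻¹ * ↑(b i) ∈ H) →
      MulAction.stabilizer ↥B ω = ⊥ → MulAction.stabilizer ↥G ω' = ⊥ := by
    intro ω ω' b y hb hy hyI hyH hstab
    rw [Subgroup.eq_bot_iff_forall]
    intro g hg
    have hg' : ∀ i, ((↑(y i) : A))⁻¹ * ↑g * ↑(y i) ∈ H := by
      intro i
      have h1 : g • ω' i = ω' i := by
        have := congrFun (MulAction.mem_stabilizer_iff.mp hg) i
        simpa [Pi.smul_apply] using this
      rw [← hy i, MulAction.Quotient.smul_mk, smul_eq_mul] at h1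
      have h2 := QuotientGroup.eq.mp h1
      have h3 : (y i)⁻¹ * g * y i ∈ S := by
        have := S.inv_mem h2
        simpa [mul_assoc] using this
      exact hSH ⟨_, h3, rfl⟩
    have hgB : (↑g : A) ∈ B := by
      have heq : (↑g : A) = ↑(y 0) * ((↑(y 0) : A)⁻¹ * ↑g * ↑(y 0)) * (↑(y 0) : A)⁻¹ := by
        group
      rw [heq]
      exact B.mul_mem (B.mul_mem (hIB (hyI 0)) (hHB (hg' 0))) (B.inv_mem (hIB (hyI 0)))
    have hgstab : (⟨↑g, hgB⟩ : ↥B) ∈ MulAction.stabilizer ↥B ω := by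
      rw [MulAction.mem_stabilizer_iff]
      funext i
      simp only [Pi.smul_apply]
      rw [← hb i, MulAction.Quotient.smul_mk, smul_eq_mul]
      refine QuotientGroup.eq.mpr ?_
      rw [Subgroup.mem_subgroupOf]
      have hcoe : (↑((((⟨↑g, hgB⟩ : ↥B)) * b i)⁻¹ * b i) : A)
          = ((↑(y i) : A)⁻¹ * ↑(b i))⁻¹ * ((↑(y i) : A)⁻¹ * ↑g * ↑(y i))⁻¹
            * ((↑(y i) : A)⁻¹ * ↑(b i)) := by
        push_cast
        group
      rw [hcoe]
      exact H.mul_mem (H.mul_mem (H.inv_mem (hyH i)) (H.inv_mem (hg' i))) (hyH i)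
    rw [hstab, Subgroup.mem_bot] at hgstab
    have hA : (↑g : A) = 1 := congrArg Subtype.val hgstab
    exact Subtype.ext hA
  -- orbit transfer
  have orb3 : ∀ (ω₁ ω₂ : Fin 5 → ↥B ⧸ H.subgroupOf B) (ω'₁ ω'₂ : Fin 5 → ↥G ⧸ S)
      (b₁ : Fin 5 → ↥B) (y₁ : Fin 5 → ↥G) (b₂ : Fin 5 → ↥B) (y₂ : Fin 5 → ↥G),
      (∀ i, QuotientGroup.mk (b₁ i) = ω₁ i) → (∀ i, QuotientGroup.mk (y₁ i) = ω'₁ i) →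
      (∀ i, (↑(y₁ i) : A) ∈ I) → (∀ i, ((↑(y₁ i) : A))⁻¹ * ↑(b₁ i) ∈ H) →
      (∀ i, QuotientGroup.mk (b₂ i) = ω₂ i) → (∀ i, QuotientGroup.mk (y₂ i) = ω'₂ i) →
      (∀ i, (↑(y₂ i) : A) ∈ I) → (∀ i, ((↑(y₂ i) : A))⁻¹ * ↑(b₂ i) ∈ H) →
      MulAction.orbit ↥G ω'₁ = MulAction.orbit ↥G ω'₂ →
      MulAction.orbit ↥B ω₁ = MulAction.orbit ↥B ω₂ := by
    intro ω₁ ω₂ ω'₁ ω'₂ b₁ y₁ b₂ y₂ hb₁ hy₁ hyI₁ hyH₁ hb₂ hy₂ hyI₂ hyH₂ horb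
    rw [MulAction.orbit_eq_iff, MulAction.mem_orbit_iff] at horb ⊢
    obtain ⟨g, hg⟩ := horb
    have hg' : ∀ i, ((↑(y₁ i) : A))⁻¹ * ↑g * ↑(y₂ i) ∈ H := by
      intro i
      have h1 : g • ω'₂ i = ω'₁ i := by
        have := congrFun hg i
        simpa [Pi.smul_apply] using this
      rw [← hy₂ i, ← hy₁ i, MulAction.Quotient.smul_mk, smul_eq_mul] at h1
      have h2 := QuotientGroup.eq.mp h1
      have h3 : (y₁ i)⁻¹ * g * y₂ i ∈ S := by
        have := S.inv_mem h2
        simpa [mul_assoc] using this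
      exact hSH ⟨_, h3, rfl⟩
    have hgB : (↑g : A) ∈ B := by
      have heq : (↑g : A) = ↑(y₁ 0) * ((↑(y₁ 0) : A)⁻¹ * ↑g * ↑(y₂ 0)) * (↑(y₂ 0) : A)⁻¹ := by
        group
      rw [heq]
      exact B.mul_mem (B.mul_mem (hIB (hyI₁ 0)) (hHB (hg' 0))) (B.inv_mem (hIB (hyI₂ 0)))
    refine ⟨⟨↑g, hgB⟩, ?_⟩
    funext i
    simp only [Pi.smul_apply]
    rw [← hb₂ i, ← hb₁ i, MulAction.Quotient.smul_mk, smul_eq_mul]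
    refine QuotientGroup.eq.mpr ?_
    rw [Subgroup.mem_subgroupOf]
    have hcoe : (↑((((⟨↑g, hgB⟩ : ↥B)) * b₂ i)⁻¹ * b₁ i) : A)
        = ((↑(y₂ i) : A)⁻¹ * ↑(b₂ i))⁻¹ * ((↑(y₁ i) : A)⁻¹ * ↑g * ↑(y₂ i))⁻¹
          * ((↑(y₁ i) : A)⁻¹ * ↑(b₁ i)) := by
      push_cast
      group
    rw [hcoe]
    exact H.mul_mem (H.mul_mem (H.inv_mem (hyH₂ i)) (H.inv_mem (hg' i))) (hyH₁ i)
  -- assemble the injection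
  have hwit : ∀ O : {O : Set (Fin 5 → ↥B ⧸ H.subgroupOf B) //
      ∃ ω, MulAction.stabilizer ↥B ω = (H.subgroupOf B).normalCore ∧
        O = MulAction.orbit ↥B ω},
      ∃ ω, MulAction.stabilizer ↥B ω = ⊥ ∧ O.1 = MulAction.orbit ↥B ω := by
    rintro ⟨O, ω, h1, h2⟩
    rw [hcoreH] at h1
    exact ⟨ω, h1, h2⟩
  choose W hW1 hW2 using hwit
  choose L Lb Ly hLb hLy hLyI hLyH using lift
  have hfex : ∃ f : {O : Set (Fin 5 → ↥B ⧸ H.subgroupOf B) //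
        ∃ ω, MulAction.stabilizer ↥B ω = (H.subgroupOf B).normalCore ∧
          O = MulAction.orbit ↥B ω} →
      {O : Set (Fin 5 → ↥G ⧸ S) //
        ∃ ω, MulAction.stabilizer ↥G ω = S.normalCore ∧ O = MulAction.orbit ↥G ω},
      Function.Injective f := by
    refine ⟨fun O => ⟨MulAction.orbit ↥G (L (W O)), L (W O), ?_, rfl⟩, ?_⟩
    · rw [hcoreS]
      exact stab2 (W O) (L (W O)) (Lb (W O)) (Ly (W O)) (hLb (W O)) (hLy (W O))
        (hLyI (W O)) (hLyH (W O)) (hW1 O)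
    · intro O₁ O₂ hfeq
      have h12 : MulAction.orbit ↥G (L (W O₁)) = MulAction.orbit ↥G (L (W O₂)) :=
        congrArg Subtype.val hfeq
      have horb := orb3 (W O₁) (W O₂) (L (W O₁)) (L (W O₂)) (Lb (W O₁)) (Ly (W O₁))
        (Lb (W O₂)) (Ly (W O₂)) (hLb (W O₁)) (hLy (W O₁)) (hLyI (W O₁)) (hLyH (W O₁))
        (hLb (W O₂)) (hLy (W O₂)) (hLyI (W O₂)) (hLyH (W O₂)) h12
      apply Subtype.ext
      rw [hW2 O₁, hW2 O₂, horb]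
  obtain ⟨f, hfinj⟩ := hfex
  have hcard := Nat.card_le_card_of_injective f hfinj
  unfold numRegOrbits at h5 ⊢
  exact h5.trans hcard

end Main


/-- Let `G₀` be a finite nonabelian simple group, identified with the
group of inner automorphisms inside `Aut(G₀)`, and let `G₀ ≤ G ≤ Aut(G₀)`.  If
`Reg_H(H·G₀, 5) ≥ 5` for every maximal solvable subgroup `H` of `Aut(G₀)`, then
`Reg_S(G, 5) ≥ 5` for every solvable subgroup `S` of `G`. -/
theorem regOrbits_of_maxSolvable {G₀ : Type*} [Group G₀] [Finite G₀]
    (hsimple : IsSimpleGroup G₀) (hnonab : ∃ a b : G₀, a * b ≠ b * a)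
    (G : Subgroup (MulAut G₀)) (hG : (MulAut.conj : G₀ →* MulAut G₀).range ≤ G)
    (hmax : ∀ H : Subgroup (MulAut G₀), IsSolvable H →
      (∀ K : Subgroup (MulAut G₀), IsSolvable K → H ≤ K → H = K) →
      5 ≤ numRegOrbits (H.subgroupOf (H ⊔ (MulAut.conj : G₀ →* MulAut G₀).range)) 5)
    (S : Subgroup G) (hS : IsSolvable S) :
    5 ≤ numRegOrbits S 5 := by
  classical
  haveI : Finite (MulAut G₀) :=
    Finite.of_injective (DFunLike.coe : MulAut G₀ → (G₀ → G₀)) DFunLike.coe_injective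
  haveI : ((MulAut.conj : G₀ →* MulAut G₀).range).Normal := aux_I_normal
  exact main_generic (MulAut.conj : G₀ →* MulAut G₀).range
    (aux_centralizer hsimple hnonab) (aux_I_simple hsimple hnonab)
    (aux_I_not_solvable hsimple hnonab) G hG hmax S hS
end

section
/- Let q be a prime power and n = n_1 + ⋯ + n_k with n_i ≥ 1. Let H ≤ GL_n(q) be a subgroup all of whose elements are block upper triangular with diagonal blocks of sizes n_k, n_{k−1}, …, n_1 (in this order), and for each i let H_i ≤ GL_{n_i}(q) be the group of i-th diagonal blocks of elements of H. If for every i there exists x_i ∈ GL_{n_i}(q) (respectively x_i ∈ SL_{n_i}(q)) such that H_i ∩ x_i⁻¹H_ix_i consists of upper triangular matrices, then there exist x, y ∈ GL_n(q) (respectively x, y ∈ SL_n(q)) such that (H ∩ x⁻¹Hx) ∩ y⁻¹(H ∩ x⁻¹Hx)y ≤ D(GL_n(q)), the group of diagonal matrices. -/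
open Matrix

/-- The conjugate `H^g = g⁻¹ H g` of a subgroup. -/
def conjS {G : Type*} [Group G] (H : Subgroup G) (g : G) : Subgroup G :=
  H.comap (MulAut.conj g).toMonoidHom

/-- A matrix is diagonal if all its off-diagonal entries vanish. -/
def IsDiagMat {F : Type*} [Zero F] {ι : Type*} (M : Matrix ι ι F) : Prop :=
  ∀ i j, i ≠ j → M i j = 0

/-- A matrix over `Fin r` is upper triangular if all entries below the diagonal vanish. -/
def IsUpperMat {F : Type*} [Zero F] {r : ℕ} (M : Matrix (Fin r) (Fin r) F) : Prop :=
  ∀ i j, j < i → M i j = 0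

/-- The index set for `GL_n(q)`, `n = n_1 + ⋯ + n_k`, partitioned into `k` consecutive
blocks of sizes `ns i`. -/
abbrev BIdx {k : ℕ} (ns : Fin k → ℕ) : Type := (i : Fin k) × Fin (ns i)

namespace BTRAux

lemma mem_conjS {G : Type*} [Group G] {H : Subgroup G} {y g : G} :
    g ∈ conjS H y ↔ y * g * y⁻¹ ∈ H := Iff.rfl

section Mono

variable {F : Type*} [Field F] {ι : Type*} [Fintype ι] [DecidableEq ι]

/-- The monomial matrix with permutation `σ` and scaling `c`, as a unit. -/
def monoUnit (σ : Equiv.Perm ι) (c : ι → Fˣ) : (Matrix ι ι F)ˣ where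
  val := Matrix.of fun p q => if q = σ p then (c q : F) else 0
  inv := Matrix.of fun p q => if p = σ q then ((c p)⁻¹ : Fˣ) else 0
  val_inv := by
    ext p q
    rw [Matrix.mul_apply, Finset.sum_eq_single (σ p)]
    · rcases eq_or_ne p q with rfl | h
      · simp
      · have : ¬ (σ p = σ q) := fun hc => h (σ.injective hc)
        simp [Matrix.one_apply, h, this]
    · intro r _ hr
      simp [Matrix.of_apply, hr]
    · intro h; exact absurd (Finset.mem_univ _) h
  inv_val := by
    ext p q
    rw [Matrix.mul_apply, Finset.sum_eq_single (σ.symm p)]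
    · rcases eq_or_ne p q with rfl | h
      · simp
      · simp [Matrix.one_apply, h, Ne.symm h]
    · intro r _ hr
      have h1 : ¬ (p = σ r) := fun hc => hr (by rw [hc]; simp)
      simp [Matrix.of_apply, h1]
    · intro h; exact absurd (Finset.mem_univ _) h

lemma monoUnit_mul_apply (σ : Equiv.Perm ι) (c : ι → Fˣ) (A : Matrix ι ι F) (p q : ι) :
    (((monoUnit σ c : (Matrix ι ι F)ˣ) : Matrix ι ι F) * A) p q = (c (σ p) : F) * A (σ p) q := by
  rw [Matrix.mul_apply, Finset.sum_eq_single (σ p)]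
  · simp [monoUnit]
  · intro r _ hr
    simp [monoUnit, hr]
  · intro h; exact absurd (Finset.mem_univ _) h

lemma mul_monoUnit_inv_apply (σ : Equiv.Perm ι) (c : ι → Fˣ) (A : Matrix ι ι F) (p q : ι) :
    (A * (monoUnit σ c : (Matrix ι ι F)ˣ).inv) p q = A p (σ q) * ((c (σ q))⁻¹ : Fˣ) := by
  rw [Matrix.mul_apply, Finset.sum_eq_single (σ q)]
  · simp [monoUnit]
  · intro r _ hr
    have h1 : ¬ (r = σ q) := hr
    simp [monoUnit, h1]
  · intro h; exact absurd (Finset.mem_univ _) h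

lemma monoUnit_conj_apply (σ : Equiv.Perm ι) (c : ι → Fˣ) (g : (Matrix ι ι F)ˣ) (p q : ι) :
    ((monoUnit σ c * g * (monoUnit σ c)⁻¹ : (Matrix ι ι F)ˣ) : Matrix ι ι F) p q
      = (c (σ p) : F) * (((g : Matrix ι ι F) (σ p) (σ q)) * ((c (σ q))⁻¹ : Fˣ)) := by
  have h1 : ((monoUnit σ c * g * (monoUnit σ c)⁻¹ : (Matrix ι ι F)ˣ) : Matrix ι ι F)
      = ((monoUnit σ c : (Matrix ι ι F)ˣ) : Matrix ι ι F) *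
        ((g : Matrix ι ι F) * (monoUnit σ c : (Matrix ι ι F)ˣ).inv) := by
    rw [Units.val_mul, Units.val_mul, mul_assoc]
    rfl
  rw [h1, monoUnit_mul_apply, mul_monoUnit_inv_apply]

lemma monoUnit_val_eq (σ : Equiv.Perm ι) (c : ι → Fˣ) :
    ((monoUnit σ c : (Matrix ι ι F)ˣ) : Matrix ι ι F)
      = (σ.permMatrix F) * Matrix.diagonal (fun q => (c q : F)) := by
  ext p q
  rw [Matrix.mul_diagonal]
  simp only [monoUnit, Matrix.of_apply, Equiv.Perm.permMatrix, PEquiv.toMatrix_apply,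
    Equiv.toPEquiv_apply, Option.mem_def, Option.some.injEq]
  by_cases h : q = σ p
  · simp [h]
  · simp [h, Ne.symm h]

lemma monoUnit_det (σ : Equiv.Perm ι) (c : ι → Fˣ) :
    ((monoUnit σ c : (Matrix ι ι F)ˣ) : Matrix ι ι F).det
      = ((Equiv.Perm.sign σ : ℤ) : F) * ∏ q, (c q : F) := by
  rw [monoUnit_val_eq, Matrix.det_mul, Matrix.det_permutation, Matrix.det_diagonal]

/-- Conjugating a group of upper triangular matrices by an order-reversing monomial matrix. -/
lemma exists_reverser [LinearOrder ι] (K : Subgroup (Matrix ι ι F)ˣ)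
    (hK : ∀ g ∈ K, ∀ p q : ι, q < p → (g : Matrix ι ι F) p q = 0) :
    ∃ y : (Matrix ι ι F)ˣ, (y : Matrix ι ι F).det = 1 ∧
      ∀ g ∈ K ⊓ conjS K y, IsDiagMat (g : Matrix ι ι F) := by
  classical
  set eo : Fin (Fintype.card ι) ≃o ι := monoEquivOfFin ι rfl with heo
  set σ : Equiv.Perm ι := (eo.symm.toEquiv.trans Fin.revPerm).trans eo.toEquiv with hσdef
  have hσ : ∀ a b : ι, σ a < σ b ↔ b < a := by
    intro a b
    show eo (Fin.rev (eo.symm a)) < eo (Fin.rev (eo.symm b)) ↔ b < a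
    rw [eo.lt_iff_lt, Fin.rev_lt_rev, eo.symm.lt_iff_lt]
  have hσ' : ∀ a b : ι, σ.symm a < σ.symm b ↔ b < a := by
    intro a b
    conv_rhs => rw [← σ.apply_symm_apply a, ← σ.apply_symm_apply b]
    rw [hσ]
  obtain ⟨c, hc⟩ : ∃ c : ι → Fˣ,
      ((monoUnit σ c : (Matrix ι ι F)ˣ) : Matrix ι ι F).det = 1 := by
    rcases isEmpty_or_nonempty ι with hι | hι
    · exact ⟨1, Matrix.det_isEmpty⟩
    · have hss : ((Equiv.Perm.sign σ : ℤ) : F) * ((Equiv.Perm.sign σ : ℤ) : F) = 1 := by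
        rw [← Int.cast_mul, ← Units.val_mul, Int.units_mul_self, Units.val_one, Int.cast_one]
      obtain ⟨su, hsu⟩ := IsUnit.of_mul_eq_one _ hss
      refine ⟨fun p => if p = Classical.arbitrary ι then su else 1, ?_⟩
      rw [monoUnit_det]
      have hprod : ∏ q : ι, Units.val (if q = Classical.arbitrary ι then su else 1)
          = ((Equiv.Perm.sign σ : ℤ) : F) := by
        rw [Finset.prod_eq_single (Classical.arbitrary ι)]
        · simp [hsu]
        · intro b _ hb; simp [hb]
        · intro h; exact absurd (Finset.mem_univ _) h
      rw [hprod]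
      exact hss
  refine ⟨monoUnit σ c, hc, ?_⟩
  intro g hg p q hpq
  have hgK : g ∈ K := hg.1
  have hgc : (monoUnit σ c : (Matrix ι ι F)ˣ) * g * (monoUnit σ c)⁻¹ ∈ K := hg.2
  rcases lt_or_gt_of_ne hpq with h | h
  · -- p < q : use conjugated membership
    have hlt : σ.symm q < σ.symm p := (hσ' q p).mpr h
    have h0 := hK _ hgc (σ.symm p) (σ.symm q) hlt
    rw [monoUnit_conj_apply, σ.apply_symm_apply, σ.apply_symm_apply] at h0
    rcases mul_eq_zero.mp h0 with h1 | h1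
    · exact absurd h1 (Units.ne_zero _)
    rcases mul_eq_zero.mp h1 with h2 | h2
    · exact h2
    · exact absurd h2 (Units.ne_zero _)
  · exact hK g hgK p q h

end Mono

section Blocks

variable {F : Type*} [Field F] {k : ℕ} {ns : Fin k → ℕ}

/-- The `i`-th diagonal block of a matrix. -/
def blk (i : Fin k) (M : Matrix (BIdx ns) (BIdx ns) F) :
    Matrix (Fin (ns i)) (Fin (ns i)) F :=
  Matrix.of fun a b => M ⟨i, a⟩ ⟨i, b⟩

@[simp] lemma blk_apply (i : Fin k) (M : Matrix (BIdx ns) (BIdx ns) F) (a b : Fin (ns i)) :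
    blk i M a b = M ⟨i, a⟩ ⟨i, b⟩ := rfl

lemma blk_one (i : Fin k) : blk i (1 : Matrix (BIdx ns) (BIdx ns) F) = 1 := by
  ext a b
  rw [blk_apply, Matrix.one_apply, Matrix.one_apply]
  by_cases h : a = b
  · subst h; simp
  · have h2 : ¬ ((⟨i, a⟩ : BIdx ns) = ⟨i, b⟩) := by
      simp only [Sigma.mk.inj_iff, heq_eq_eq, true_and]
      exact h
    simp [h, h2]

lemma blk_mul_of_tri (i : Fin k) (A B : Matrix (BIdx ns) (BIdx ns) F)
    (hA : ∀ p q : BIdx ns, q.1 < p.1 → A p q = 0)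
    (hB : ∀ p q : BIdx ns, q.1 < p.1 → B p q = 0) :
    blk i (A * B) = blk i A * blk i B := by
  ext a b
  rw [blk_apply, Matrix.mul_apply, Matrix.mul_apply, ← Finset.univ_sigma_univ,
    Finset.sum_sigma, Fintype.sum_eq_single i]
  · exact Finset.sum_congr rfl fun c _ => rfl
  · intro j hj
    refine Finset.sum_eq_zero fun c _ => ?_
    rcases lt_or_gt_of_ne hj with h | h
    · rw [hA ⟨i, a⟩ ⟨j, c⟩ h, zero_mul]
    · rw [hB ⟨j, c⟩ ⟨i, b⟩ h, mul_zero]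

/-- The `i`-th diagonal block of an element of a group of block upper triangular
matrices, as a unit. -/
def dblkU (i : Fin k) (g : (Matrix (BIdx ns) (BIdx ns) F)ˣ)
    (h1 : ∀ p q : BIdx ns, q.1 < p.1 → (g : Matrix (BIdx ns) (BIdx ns) F) p q = 0)
    (h2 : ∀ p q : BIdx ns, q.1 < p.1 →
      ((g⁻¹ : (Matrix (BIdx ns) (BIdx ns) F)ˣ) : Matrix (BIdx ns) (BIdx ns) F) p q = 0) :
    (Matrix (Fin (ns i)) (Fin (ns i)) F)ˣ where
  val := blk i (g : Matrix (BIdx ns) (BIdx ns) F)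
  inv := blk i ((g⁻¹ : (Matrix (BIdx ns) (BIdx ns) F)ˣ) : Matrix (BIdx ns) (BIdx ns) F)
  val_inv := by
    rw [← blk_mul_of_tri i _ _ h1 h2, ← Units.val_mul, mul_inv_cancel, Units.val_one, blk_one]
  inv_val := by
    rw [← blk_mul_of_tri i _ _ h2 h1, ← Units.val_mul, inv_mul_cancel, Units.val_one, blk_one]

lemma bd_mul_apply (B : ∀ i, Matrix (Fin (ns i)) (Fin (ns i)) F)
    (A : Matrix (BIdx ns) (BIdx ns) F) (i : Fin k) (a : Fin (ns i)) (q : BIdx ns) :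
    (blockDiagonal' B * A) ⟨i, a⟩ q = ∑ c, B i a c * A ⟨i, c⟩ q := by
  rw [Matrix.mul_apply, ← Finset.univ_sigma_univ, Finset.sum_sigma, Fintype.sum_eq_single i]
  · exact Finset.sum_congr rfl fun c _ => by rw [blockDiagonal'_apply_eq]
  · intro j hj
    exact Finset.sum_eq_zero fun c _ => by
      rw [blockDiagonal'_apply_ne _ _ _ (Ne.symm hj), zero_mul]

lemma mul_bd_apply (B : ∀ i, Matrix (Fin (ns i)) (Fin (ns i)) F)
    (A : Matrix (BIdx ns) (BIdx ns) F) (p : BIdx ns) (j : Fin k) (b : Fin (ns j)) :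
    (A * blockDiagonal' B) p ⟨j, b⟩ = ∑ c, A p ⟨j, c⟩ * B j c b := by
  rw [Matrix.mul_apply, ← Finset.univ_sigma_univ, Finset.sum_sigma, Fintype.sum_eq_single j]
  · exact Finset.sum_congr rfl fun c _ => by rw [blockDiagonal'_apply_eq]
  · intro i hi
    exact Finset.sum_eq_zero fun c _ => by
      rw [blockDiagonal'_apply_ne _ _ _ hi, mul_zero]

lemma blk_bd_mul_bd (B B' : ∀ i, Matrix (Fin (ns i)) (Fin (ns i)) F)
    (A : Matrix (BIdx ns) (BIdx ns) F) (i : Fin k) :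
    blk i (blockDiagonal' B * A * blockDiagonal' B') = B i * blk i A * B' i := by
  ext a b
  rw [blk_apply, mul_bd_apply, Matrix.mul_apply]
  refine Finset.sum_congr rfl fun c _ => ?_
  rw [bd_mul_apply, Matrix.mul_apply]
  rfl

/-- The block diagonal matrix with invertible blocks, as a unit. -/
def bdU (x : ∀ i, (Matrix (Fin (ns i)) (Fin (ns i)) F)ˣ) :
    (Matrix (BIdx ns) (BIdx ns) F)ˣ where
  val := blockDiagonal' fun i => ((x i : (Matrix (Fin (ns i)) (Fin (ns i)) F)ˣ) :
    Matrix (Fin (ns i)) (Fin (ns i)) F)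
  inv := blockDiagonal' fun i => (((x i)⁻¹ : (Matrix (Fin (ns i)) (Fin (ns i)) F)ˣ) :
    Matrix (Fin (ns i)) (Fin (ns i)) F)
  val_inv := by
    rw [← Matrix.blockDiagonal'_mul]
    have : (fun i => ((x i : (Matrix (Fin (ns i)) (Fin (ns i)) F)ˣ) :
        Matrix (Fin (ns i)) (Fin (ns i)) F) *
        (((x i)⁻¹ : (Matrix (Fin (ns i)) (Fin (ns i)) F)ˣ) :
          Matrix (Fin (ns i)) (Fin (ns i)) F))
        = (1 : ∀ i, Matrix (Fin (ns i)) (Fin (ns i)) F) := by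
      funext i
      rw [← Units.val_mul, mul_inv_cancel, Units.val_one]
      rfl
    rw [this, Matrix.blockDiagonal'_one]
  inv_val := by
    rw [← Matrix.blockDiagonal'_mul]
    have : (fun i => (((x i)⁻¹ : (Matrix (Fin (ns i)) (Fin (ns i)) F)ˣ) :
        Matrix (Fin (ns i)) (Fin (ns i)) F) *
        ((x i : (Matrix (Fin (ns i)) (Fin (ns i)) F)ˣ) :
          Matrix (Fin (ns i)) (Fin (ns i)) F))
        = (1 : ∀ i, Matrix (Fin (ns i)) (Fin (ns i)) F) := by
      funext i
      rw [← Units.val_mul, inv_mul_cancel, Units.val_one]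
      rfl
    rw [this, Matrix.blockDiagonal'_one]

lemma bdU_det (x : ∀ i, (Matrix (Fin (ns i)) (Fin (ns i)) F)ˣ) :
    ((bdU x : (Matrix (BIdx ns) (BIdx ns) F)ˣ) : Matrix (BIdx ns) (BIdx ns) F).det
      = ∏ i, ((x i : (Matrix (Fin (ns i)) (Fin (ns i)) F)ˣ) :
          Matrix (Fin (ns i)) (Fin (ns i)) F).det := by
  classical
  have htri : BlockTriangular
      ((bdU x : (Matrix (BIdx ns) (BIdx ns) F)ˣ) : Matrix (BIdx ns) (BIdx ns) F) Sigma.fst := by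
    rintro ⟨i, a⟩ ⟨j, b⟩ h
    show blockDiagonal' (fun i => ((x i : (Matrix (Fin (ns i)) (Fin (ns i)) F)ˣ) :
        Matrix (Fin (ns i)) (Fin (ns i)) F)) ⟨i, a⟩ ⟨j, b⟩ = 0
    exact blockDiagonal'_apply_ne (fun i => ((x i : (Matrix (Fin (ns i)) (Fin (ns i)) F)ˣ) :
      Matrix (Fin (ns i)) (Fin (ns i)) F)) a b (ne_of_gt (show j < i from h))
  rw [htri.det_fintype]
  refine Finset.prod_congr rfl fun j _ => ?_
  let ej : Fin (ns j) ≃ { p : BIdx ns // p.1 = j } :=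
    { toFun := fun a => ⟨⟨j, a⟩, rfl⟩
      invFun := fun p => Fin.cast (congrArg ns p.2) p.1.2
      left_inv := fun a => rfl
      right_inv := by
        rintro ⟨⟨i, a⟩, h⟩
        dsimp only at h
        subst h
        rfl }
  have hmat : ((((bdU x : (Matrix (BIdx ns) (BIdx ns) F)ˣ) :
      Matrix (BIdx ns) (BIdx ns) F)).toSquareBlock Sigma.fst j).submatrix ej ej
      = ((x j : (Matrix (Fin (ns j)) (Fin (ns j)) F)ˣ) : Matrix (Fin (ns j)) (Fin (ns j)) F) := by
    ext a b
    simp only [Matrix.submatrix_apply, Matrix.toSquareBlock_def, Matrix.of_apply]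
    exact blockDiagonal'_apply_eq
      (fun i => ((x i : (Matrix (Fin (ns i)) (Fin (ns i)) F)ˣ) :
        Matrix (Fin (ns i)) (Fin (ns i)) F)) j a b
  rw [← Matrix.det_submatrix_equiv_self ej, hmat]

end Blocks

section Core

variable {F : Type*} [Field F] {k : ℕ}

lemma core (ns : Fin k → ℕ)
    (H : Subgroup (Matrix (BIdx ns) (BIdx ns) F)ˣ)
    (hblock : ∀ h ∈ H, ∀ p q : BIdx ns, q.1 < p.1 →
      (h : Matrix (BIdx ns) (BIdx ns) F) p q = 0)
    (Hi : (i : Fin k) → Subgroup (Matrix (Fin (ns i)) (Fin (ns i)) F)ˣ)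
    (hHi : ∀ (i : Fin k) (g : (Matrix (Fin (ns i)) (Fin (ns i)) F)ˣ),
      g ∈ Hi i ↔ ∃ h ∈ H, ∀ a b : Fin (ns i),
        (g : Matrix (Fin (ns i)) (Fin (ns i)) F) a b =
          (h : Matrix (BIdx ns) (BIdx ns) F) ⟨i, a⟩ ⟨i, b⟩)
    (x : ∀ i, (Matrix (Fin (ns i)) (Fin (ns i)) F)ˣ)
    (hx : ∀ i, ∀ g ∈ Hi i ⊓ conjS (Hi i) (x i),
      IsUpperMat (g : Matrix (Fin (ns i)) (Fin (ns i)) F)) :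
    ∃ X y : (Matrix (BIdx ns) (BIdx ns) F)ˣ,
      (X : Matrix (BIdx ns) (BIdx ns) F).det
        = ∏ i, ((x i : (Matrix (Fin (ns i)) (Fin (ns i)) F)ˣ) :
            Matrix (Fin (ns i)) (Fin (ns i)) F).det ∧
      (y : Matrix (BIdx ns) (BIdx ns) F).det = 1 ∧
      ∀ g ∈ (H ⊓ conjS H X) ⊓ conjS (H ⊓ conjS H X) y,
        IsDiagMat (g : Matrix (BIdx ns) (BIdx ns) F) := by
  classical
  -- a linear order on the index set, refining the block order
  have inj : Function.Injective (fun p : BIdx ns => toLex ((p.1 : ℕ), (p.2 : ℕ))) := by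
    rintro ⟨i, a⟩ ⟨j, b⟩ h
    have h' : ((i : ℕ), (a : ℕ)) = ((j : ℕ), (b : ℕ)) := toLex.injective h
    have h1 : (i : ℕ) = (j : ℕ) := congrArg Prod.fst h'
    have h2 : (a : ℕ) = (b : ℕ) := congrArg Prod.snd h'
    have hij : i = j := Fin.ext h1
    subst hij
    exact congrArg (Sigma.mk i) (Fin.ext h2)
  letI : LinearOrder (BIdx ns) :=
    LinearOrder.lift' (fun p : BIdx ns => toLex ((p.1 : ℕ), (p.2 : ℕ))) inj
  set X : (Matrix (BIdx ns) (BIdx ns) F)ˣ := bdU x with hX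
  set K : Subgroup (Matrix (BIdx ns) (BIdx ns) F)ˣ := H ⊓ conjS H X with hK
  -- the diagonal blocks of elements of K
  have hdiagblk : ∀ g (hg : g ∈ K) (i : Fin k) (a b : Fin (ns i)),
      (b : ℕ) < (a : ℕ) → (g : Matrix (BIdx ns) (BIdx ns) F) ⟨i, a⟩ ⟨i, b⟩ = 0 := by
    intro g hg i a b hba
    have hgH : g ∈ H := hg.1
    have hgH' : (X : (Matrix (BIdx ns) (BIdx ns) F)ˣ) * g * X⁻¹ ∈ H := hg.2
    have h1 := hblock g hgH
    have h2 := hblock g⁻¹ (inv_mem hgH)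
    have h1' := hblock _ hgH'
    have h2' := hblock _ (inv_mem hgH')
    -- the diagonal block unit
    have hmem1 : dblkU i g h1 h2 ∈ Hi i :=
      (hHi i _).mpr ⟨g, hgH, fun a b => rfl⟩
    have hmem2 : dblkU i g h1 h2 ∈ conjS (Hi i) (x i) := by
      rw [mem_conjS]
      have hval : ((x i * dblkU i g h1 h2 * (x i)⁻¹ :
          (Matrix (Fin (ns i)) (Fin (ns i)) F)ˣ) : Matrix (Fin (ns i)) (Fin (ns i)) F)
          = (dblkU i (X * g * X⁻¹) h1' h2' : Matrix (Fin (ns i)) (Fin (ns i)) F) := by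
        show ((x i : (Matrix (Fin (ns i)) (Fin (ns i)) F)ˣ) :
            Matrix (Fin (ns i)) (Fin (ns i)) F) *
            (blk i (g : Matrix (BIdx ns) (BIdx ns) F)) *
            (((x i)⁻¹ : (Matrix (Fin (ns i)) (Fin (ns i)) F)ˣ) :
              Matrix (Fin (ns i)) (Fin (ns i)) F)
          = blk i ((X * g * X⁻¹ : (Matrix (BIdx ns) (BIdx ns) F)ˣ) :
              Matrix (BIdx ns) (BIdx ns) F)
        have hXval : ((X * g * X⁻¹ : (Matrix (BIdx ns) (BIdx ns) F)ˣ) :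
            Matrix (BIdx ns) (BIdx ns) F)
            = blockDiagonal' (fun j => ((x j : (Matrix (Fin (ns j)) (Fin (ns j)) F)ˣ) :
                Matrix (Fin (ns j)) (Fin (ns j)) F)) *
              (g : Matrix (BIdx ns) (BIdx ns) F) *
              blockDiagonal' (fun j => (((x j)⁻¹ : (Matrix (Fin (ns j)) (Fin (ns j)) F)ˣ) :
                Matrix (Fin (ns j)) (Fin (ns j)) F)) := by
          rw [Units.val_mul, Units.val_mul]
          rfl
        rw [hXval, blk_bd_mul_bd]
      have := (hHi i (dblkU i (X * g * X⁻¹) h1' h2')).mpr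
        ⟨X * g * X⁻¹, hgH', fun a b => rfl⟩
      have heq : x i * dblkU i g h1 h2 * (x i)⁻¹ = dblkU i (X * g * X⁻¹) h1' h2' :=
        Units.ext hval
      rw [heq]
      exact this
    exact hx i _ ⟨hmem1, hmem2⟩ a b hba
  -- elements of K are upper triangular for the linear order
  have hKtri : ∀ g ∈ K, ∀ p q : BIdx ns,
      toLex ((q.1 : ℕ), (q.2 : ℕ)) < toLex ((p.1 : ℕ), (p.2 : ℕ)) →
      (g : Matrix (BIdx ns) (BIdx ns) F) p q = 0 := by
    intro g hg p q hqp
    rw [Prod.Lex.lt_iff] at hqp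
    rcases hqp with h | ⟨h1, h2⟩
    · exact hblock g hg.1 p q h
    · obtain ⟨i, a⟩ := p
      obtain ⟨j, b⟩ := q
      dsimp only at h1 h2
      have hij : j = i := Fin.ext h1
      subst hij
      exact hdiagblk g hg j a b h2
  obtain ⟨y, hydet, hy⟩ := exists_reverser K (fun g hg p q h => hKtri g hg p q h)
  exact ⟨X, y, bdU_det x, hydet, hy⟩

end Core

end BTRAux

/-- Let `n = n_1 + ⋯ + n_k` (the index set of `GL_n(q)` is taken to
be `Σ i : Fin k, Fin (ns i)`, partitioned into blocks).  Let `H ≤ GL_n(q)` consist of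
block upper triangular matrices with respect to this partition, and let `H_i` be the
group of `i`-th diagonal blocks of elements of `H`.  If each `H_i` admits `x_i ∈ GL_{n_i}(q)`
(resp. `x_i ∈ SL_{n_i}(q)`) with `H_i ∩ x_i⁻¹ H_i x_i` consisting of upper triangular
matrices, then there are `x, y ∈ GL_n(q)` (resp. `SL_n(q)`) such that
`(H ∩ x⁻¹Hx) ∩ y⁻¹(H ∩ x⁻¹Hx)y` consists of diagonal matrices. -/
theorem blockTriangular_reduction {F : Type*} [Field F] [Fintype F] {k : ℕ}
    (ns : Fin k → ℕ)
    (H : Subgroup (Matrix (BIdx ns) (BIdx ns) F)ˣ)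
    (hblock : ∀ h ∈ H, ∀ p q : BIdx ns, q.1 < p.1 →
      (h : Matrix (BIdx ns) (BIdx ns) F) p q = 0)
    (Hi : (i : Fin k) → Subgroup (Matrix (Fin (ns i)) (Fin (ns i)) F)ˣ)
    (hHi : ∀ (i : Fin k) (g : (Matrix (Fin (ns i)) (Fin (ns i)) F)ˣ),
      g ∈ Hi i ↔ ∃ h ∈ H, ∀ a b : Fin (ns i),
        (g : Matrix (Fin (ns i)) (Fin (ns i)) F) a b =
          (h : Matrix (BIdx ns) (BIdx ns) F) ⟨i, a⟩ ⟨i, b⟩) :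
    ((∀ i : Fin k, ∃ x : (Matrix (Fin (ns i)) (Fin (ns i)) F)ˣ,
        ∀ g ∈ Hi i ⊓ conjS (Hi i) x,
          IsUpperMat (g : Matrix (Fin (ns i)) (Fin (ns i)) F)) →
      ∃ x y : (Matrix (BIdx ns) (BIdx ns) F)ˣ,
        ∀ g ∈ (H ⊓ conjS H x) ⊓ conjS (H ⊓ conjS H x) y,
          IsDiagMat (g : Matrix (BIdx ns) (BIdx ns) F)) ∧
    ((∀ i : Fin k, ∃ x : (Matrix (Fin (ns i)) (Fin (ns i)) F)ˣ,
        (x : Matrix (Fin (ns i)) (Fin (ns i)) F).det = 1 ∧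
        ∀ g ∈ Hi i ⊓ conjS (Hi i) x,
          IsUpperMat (g : Matrix (Fin (ns i)) (Fin (ns i)) F)) →
      ∃ x y : (Matrix (BIdx ns) (BIdx ns) F)ˣ,
        (x : Matrix (BIdx ns) (BIdx ns) F).det = 1 ∧
        (y : Matrix (BIdx ns) (BIdx ns) F).det = 1 ∧
        ∀ g ∈ (H ⊓ conjS H x) ⊓ conjS (H ⊓ conjS H x) y,
          IsDiagMat (g : Matrix (BIdx ns) (BIdx ns) F)) := by
  constructor
  · intro h
    choose x hx using h
    obtain ⟨X, y, _, _, hdiag⟩ := BTRAux.core ns H hblock Hi hHi x hx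
    exact ⟨X, y, hdiag⟩
  · intro h
    choose x hxdet hx using h
    obtain ⟨X, y, hXdet, hydet, hdiag⟩ := BTRAux.core ns H hblock Hi hHi x hx
    refine ⟨X, y, ?_, hydet, hdiag⟩
    rw [hXdet]
    simp [hxdet]
end

section
/- Let q be a prime power, let V = F_q^n with basis v_1,…,v_n, let 0 < m < n, and set U = ⟨v_{n−m+1},…,v_n⟩. If H ≤ GL_n(q) stabilises U (i.e. (U)h = U for all h ∈ H), then there exists z ∈ SL_n(q) such that D(GL_n(q)) ∩ z⁻¹Hz ≤ Z(GL_n(q)); that is, every matrix in z⁻¹Hz that is diagonal with respect to the basis v_1,…,v_n is scalar. -/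
open Matrix

/-- The general linear group `GL_n(F)`, as the unit group of the matrix ring. -/
abbrev GLn (n : ℕ) (F : Type*) [Field F] := (Matrix (Fin n) (Fin n) F)ˣ

/-- `U = ⟨v_{n-m+1}, …, v_n⟩`, the span of the last `m` standard basis vectors of `F^n`. -/
def lastCoords (F : Type*) [Field F] (n m : ℕ) : Submodule F (Fin n → F) :=
  Submodule.span F {w : Fin n → F | ∃ j : Fin n, n - m ≤ (j : ℕ) ∧ w = Pi.single j (1 : F)}

/-! Conjugate by `z = 1 + N`, where `N = a bᵀ` is the all-ones block in rows `< n - m` and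
columns `≥ n - m`; since `N² = 0`, `z` is a unipotent element of `SL_n` with `z⁻¹ = 1 - N`.
For diagonal `g = diag d`, the matrix `z g z⁻¹` has entry `d j - d i` at every `(i, j)` of that
block, and it vanishes because `z g z⁻¹ ∈ H` maps `U` into `U`. So every diagonal entry of
the first block equals every diagonal entry of the second, and both blocks are nonempty. -/

namespace Matrix

variable {ι R : Type*} [Fintype ι] [CommRing R]

lemma vecMulVec_mul_self_eq_zero {a b : ι → R} (hba : b ⬝ᵥ a = 0) :
    vecMulVec a b * vecMulVec a b = 0 := by
  rw [vecMulVec_mul_vecMulVec, hba, zero_smul, vecMulVec_zero]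

variable [DecidableEq ι]

def oneAddVecMulVecUnit (a b : ι → R) (hba : b ⬝ᵥ a = 0) : (Matrix ι ι R)ˣ where
  val := 1 + vecMulVec a b
  inv := 1 - vecMulVec a b
  val_inv := by
    rw [one_add_mul, mul_one_sub, vecMulVec_mul_self_eq_zero hba, sub_zero, sub_add_cancel]
  inv_val := by
    rw [one_sub_mul, mul_one_add, vecMulVec_mul_self_eq_zero hba, add_zero, add_sub_cancel_right]

section oneAddVecMulVecUnit

variable (a b : ι → R) (hba : b ⬝ᵥ a = 0)

lemma val_oneAddVecMulVecUnit :
    (oneAddVecMulVecUnit a b hba : Matrix ι ι R) = 1 + vecMulVec a b :=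
  rfl

lemma val_inv_oneAddVecMulVecUnit :
    (↑(oneAddVecMulVecUnit a b hba)⁻¹ : Matrix ι ι R) = 1 - vecMulVec a b :=
  rfl

lemma det_oneAddVecMulVecUnit : (oneAddVecMulVecUnit a b hba : Matrix ι ι R).det = 1 := by
  rw [val_oneAddVecMulVecUnit, vecMulVec_eq Unit, det_one_add_replicateCol_mul_replicateRow, hba,
    add_zero]

end oneAddVecMulVecUnit

lemma one_add_vecMulVec_mul_diagonal_mul_one_sub {a b : ι → R} (hab : ∀ i, a i * b i = 0)
    (d : ι → R) :
    (1 + vecMulVec a b) * diagonal d * (1 - vecMulVec a b) =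
      diagonal d + of fun i j => a i * b j * (d j - d i) := by
  have hNDN : vecMulVec a b * diagonal d * vecMulVec a b = 0 := by
    have hdisj : b ᵥ* diagonal d ⬝ᵥ a = 0 :=
      Finset.sum_eq_zero fun i _ => by
        rw [vecMul_diagonal]
        linear_combination d i * hab i
    rw [vecMulVec_mul, vecMulVec_mul_vecMulVec, hdisj, zero_smul, vecMulVec_zero]
  have hexpand : (1 + vecMulVec a b) * diagonal d * (1 - vecMulVec a b) =
      diagonal d + vecMulVec a b * diagonal d - diagonal d * vecMulVec a b -
        vecMulVec a b * diagonal d * vecMulVec a b := by noncomm_ring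
  rw [hexpand, hNDN, sub_zero]
  ext i j
  simp only [add_apply, sub_apply, mul_diagonal, diagonal_mul, vecMulVec_apply, of_apply]
  ring

end Matrix

lemma mem_conjS {G : Type*} [Group G] {H : Subgroup G} {g z : G} :
    g ∈ conjS H z ↔ z * g * z⁻¹ ∈ H :=
  Iff.rfl

section lastCoords

variable {F : Type*} [Field F] {n m : ℕ}

lemma single_mem_lastCoords {j : Fin n} (hj : n - m ≤ (j : ℕ)) :
    Pi.single j (1 : F) ∈ lastCoords F n m :=
  Submodule.subset_span ⟨j, hj, rfl⟩

lemma apply_eq_zero_of_mem_lastCoords {v : Fin n → F} (hv : v ∈ lastCoords F n m) {i : Fin n}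
    (hi : (i : ℕ) < n - m) : v i = 0 := by
  suffices lastCoords F n m ≤ LinearMap.ker (LinearMap.proj i) from this hv
  rw [lastCoords, Submodule.span_le]
  rintro w ⟨j, hj, rfl⟩
  exact Pi.single_eq_of_ne (by rintro rfl; omega) 1

end lastCoords

theorem diag_inter_conj_le_scalar_general {F : Type*} [Field F] {n m : ℕ}
    (hm : 0 < m) (hmn : m < n) (H : Subgroup (GLn n F))
    (hstab : ∀ h ∈ H, ∀ v ∈ lastCoords F n m,
      (h : Matrix (Fin n) (Fin n) F) *ᵥ v ∈ lastCoords F n m) :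
    ∃ z : GLn n F, (z : Matrix (Fin n) (Fin n) F).det = 1 ∧
      ∀ g ∈ conjS H z,
        (∀ i j, i ≠ j → (g : Matrix (Fin n) (Fin n) F) i j = 0) →
        ∃ c : F, (g : Matrix (Fin n) (Fin n) F) = c • (1 : Matrix (Fin n) (Fin n) F) := by
  classical
  set a : Fin n → F := fun i => if (i : ℕ) < n - m then 1 else 0
  set b : Fin n → F := fun j => if (j : ℕ) < n - m then 0 else 1
  have hab : ∀ i, a i * b i = 0 := fun i => by by_cases h : (i : ℕ) < n - m <;> simp [a, b, h]
  have hba : b ⬝ᵥ a = 0 := Finset.sum_eq_zero fun i _ => by rw [mul_comm, hab]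
  refine ⟨oneAddVecMulVecUnit a b hba, det_oneAddVecMulVecUnit a b hba, fun g hg hdiag => ?_⟩
  set d := (g : Matrix (Fin n) (Fin n) F).diag
  have hgd : (g : Matrix (Fin n) (Fin n) F) = diagonal d := (IsDiag.diagonal_diag hdiag).symm
  have hcross : ∀ i j : Fin n, (i : ℕ) < n - m → n - m ≤ (j : ℕ) → d i = d j := by
    intro i j hi hj
    have hU := apply_eq_zero_of_mem_lastCoords
      (hstab _ (mem_conjS.1 hg) _ (single_mem_lastCoords hj)) hi
    have hij : i ≠ j := by rintro rfl; omega
    rw [Units.val_mul, Units.val_mul, val_oneAddVecMulVecUnit, val_inv_oneAddVecMulVecUnit,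
      hgd, one_add_vecMulVec_mul_diagonal_mul_one_sub hab, mulVec_single_one] at hU
    simpa [a, b, hi, hij, not_lt.2 hj, sub_eq_zero, eq_comm] using hU
  let i₀ : Fin n := ⟨0, by omega⟩
  let j₀ : Fin n := ⟨n - 1, by omega⟩
  have hi₀ : (i₀ : ℕ) < n - m := by simp only [i₀]; omega
  have hj₀ : n - m ≤ (j₀ : ℕ) := by simp only [j₀]; omega
  have hconst : ∀ k, d k = d i₀ := fun k => by
    by_cases hk : (k : ℕ) < n - m
    · rw [hcross k j₀ hk hj₀, hcross i₀ j₀ hi₀ hj₀]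
    · exact (hcross i₀ k hi₀ (by omega)).symm
  exact ⟨d i₀, by rw [hgd, smul_one_eq_diagonal, funext hconst]⟩

/-- If `0 < m < n` and `H ≤ GL_n(q)` stabilises the span `U` of the last
`m` standard basis vectors, then there is `z ∈ SL_n(q)` such that
`D(GL_n(q)) ∩ z⁻¹Hz ≤ Z(GL_n(q))`: every diagonal matrix in `z⁻¹Hz` is scalar. -/
theorem diag_inter_conj_le_scalar {F : Type*} [Field F] [Fintype F] {n m : ℕ}
    (hm : 0 < m) (hmn : m < n) (H : Subgroup (GLn n F))
    (hstab : ∀ h ∈ H, ∀ v ∈ lastCoords F n m,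
      (h : Matrix (Fin n) (Fin n) F) *ᵥ v ∈ lastCoords F n m) :
    ∃ z : GLn n F, (z : Matrix (Fin n) (Fin n) F).det = 1 ∧
      ∀ g ∈ conjS H z,
        (∀ i j, i ≠ j → (g : Matrix (Fin n) (Fin n) F) i j = 0) →
        ∃ c : F, (g : Matrix (Fin n) (Fin n) F) = c • (1 : Matrix (Fin n) (Fin n) F) :=
  diag_inter_conj_le_scalar_general hm hmn H hstab
end

section
/- Let q be a prime power and n ≥ 1. Any two cyclic subgroups of GL_n(q) of order q^n − 1 (Singer cycles) are conjugate in GL_n(q). -/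
set_option maxHeartbeats 1600000

open Polynomial

open Polynomial

theorem singer_matrix_facts {F : Type*} [Field F] [Fintype F] {n : ℕ} (hn : 1 ≤ n)
    (M : Matrix (Fin n) (Fin n) F)
    (hM : orderOf M = Fintype.card F ^ n - 1) :
    (minpoly F M).natDegree = n ∧ Irreducible (minpoly F M) ∧
      orderOf (AdjoinRoot.root (minpoly F M)) = Fintype.card F ^ n - 1 ∧
      (∀ a : AdjoinRoot (minpoly F M), a = 0 ∨ ∃ i : ℕ, a = AdjoinRoot.root (minpoly F M) ^ i) ∧
      IsField (AdjoinRoot (minpoly F M)) := by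
  haveI : Nonempty (Fin n) := ⟨⟨0, hn⟩⟩
  set q := Fintype.card F with hq
  have hq2 : 2 ≤ q := Fintype.one_lt_card
  have hqn2 : 2 ≤ q ^ n := le_trans hq2 (Nat.le_self_pow (by omega) q)
  set N := q ^ n - 1 with hNdef
  have hN1 : 1 ≤ N := by omega
  have hNq : N + 1 = q ^ n := by omega
  have hint : IsIntegral F M := IsIntegral.of_finite F M
  set μ := minpoly F M with hμ
  have hμ0 : μ ≠ 0 := minpoly.ne_zero hint
  have hmonic : μ.Monic := minpoly.monic hint
  have hd1 : 1 ≤ μ.natDegree := minpoly.natDegree_pos hint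
  have hMN : M ^ N = 1 := by rw [← hM]; exact pow_orderOf_eq_one M
  have hdvd : μ ∣ (X : F[X]) ^ N - 1 := by
    apply minpoly.dvd
    simp [hMN]
  have hdn : μ.natDegree ≤ n := by
    have h1 : μ ∣ M.charpoly := minpoly.dvd F M (Matrix.aeval_self_charpoly M)
    have h2 : M.charpoly.natDegree = n := by
      rw [Matrix.charpoly_natDegree_eq_dim, Fintype.card_fin]
    exact h2 ▸ Polynomial.natDegree_le_of_dvd h1 M.charpoly_monic.ne_zero
  set r := AdjoinRoot.root μ with hr
  have hrN : r ^ N = 1 := by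
    have h0 : aeval r ((X : F[X]) ^ N - 1) = 0 := by
      rw [AdjoinRoot.aeval_eq, AdjoinRoot.mk_eq_zero]; exact hdvd
    have h1 : r ^ N - 1 = 0 := by simpa using h0
    exact sub_eq_zero.mp h1
  have horder : orderOf r = N := by
    have h1 : orderOf r ∣ N := orderOf_dvd_of_pow_eq_one hrN
    have h2 : N ∣ orderOf r := by
      rw [← hM]
      apply orderOf_dvd_of_pow_eq_one
      have hrj : r ^ orderOf r = 1 := pow_orderOf_eq_one r
      have hdvd2 : μ ∣ (X : F[X]) ^ orderOf r - 1 := by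
        apply AdjoinRoot.mk_eq_zero.mp
        rw [← AdjoinRoot.aeval_eq]
        simp [hrj]
        rw [← hr, hrj, sub_self]
      obtain ⟨c, hc⟩ := hdvd2
      have hz : aeval M ((X : F[X]) ^ orderOf r - 1) = 0 := by
        rw [hc, map_mul, minpoly.aeval, zero_mul]
      have hz2 : M ^ orderOf r - 1 = 0 := by simpa using hz
      exact sub_eq_zero.mp hz2
    exact Nat.dvd_antisymm h1 h2
  -- fintype structure on AdjoinRoot μ
  letI : Fintype (AdjoinRoot μ) := Module.fintypeOfFintype (AdjoinRoot.powerBasis hμ0).basis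
  have hcardA : Fintype.card (AdjoinRoot μ) = q ^ μ.natDegree := by
    rw [Module.card_fintype (AdjoinRoot.powerBasis hμ0).basis, Fintype.card_fin,
      AdjoinRoot.powerBasis_dim]
  haveI : Nontrivial (AdjoinRoot μ) := by
    apply Fintype.one_lt_card_iff_nontrivial.mp
    rw [hcardA]
    calc 1 < q := hq2
    _ ≤ q ^ μ.natDegree := Nat.le_self_pow (by omega) q
  -- r as a unit
  set u : (AdjoinRoot μ)ˣ := Units.ofPowEqOne r N hrN (by omega) with hu
  have huval : (u : AdjoinRoot μ) = r := rfl
  have huord : orderOf u = N := by rw [← orderOf_units, huval, horder]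
  -- the set of powers of u together with 0 exhausts the ring
  classical
  set S : Finset (AdjoinRoot μ) :=
    insert 0 (Finset.image (fun i : Fin N => ((u ^ (i : ℕ) : (AdjoinRoot μ)ˣ) : AdjoinRoot μ))
      Finset.univ) with hS
  have hSimagecard :
      (Finset.image (fun i : Fin N => ((u ^ (i : ℕ) : (AdjoinRoot μ)ˣ) : AdjoinRoot μ))
        Finset.univ).card = N := by
    rw [Finset.card_image_of_injective _ ?_, Finset.card_univ, Fintype.card_fin]
    intro i j hij
    have h1 : u ^ (i : ℕ) = u ^ (j : ℕ) := Units.ext hij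
    have := pow_injOn_Iio_orderOf (x := u) (by simpa [huord] using i.2) (by simpa [huord] using j.2) h1
    exact Fin.ext this
  have hScard : S.card = N + 1 := by
    rw [hS, Finset.card_insert_of_notMem, hSimagecard]
    simp only [Finset.mem_image, Finset.mem_univ, true_and, not_exists]
    intro i h
    exact Units.ne_zero _ h
  have hdeg : μ.natDegree = n := by
    have hle : S.card ≤ Fintype.card (AdjoinRoot μ) := Finset.card_le_univ S
    rw [hScard, hcardA] at hle
    have : q ^ n ≤ q ^ μ.natDegree := by omega
    have h2 : n ≤ μ.natDegree := (Nat.pow_le_pow_iff_right (by omega : 1 < q)).mp this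
    omega
  have hcardA' : Fintype.card (AdjoinRoot μ) = N + 1 := by rw [hcardA, hdeg]; omega
  have hSuniv : S = Finset.univ := Finset.eq_univ_of_card S (by rw [hScard, hcardA'])
  have hpow : ∀ a : AdjoinRoot μ, a = 0 ∨ ∃ i : ℕ, a = r ^ i := by
    intro a
    have ha : a ∈ S := hSuniv ▸ Finset.mem_univ a
    rw [hS] at ha
    rcases Finset.mem_insert.mp ha with h | h
    · exact Or.inl h
    · obtain ⟨i, _, hi⟩ := Finset.mem_image.mp h
      exact Or.inr ⟨(i : ℕ), by rw [← hi, Units.val_pow_eq_pow_val, huval]⟩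
  have hfield : IsField (AdjoinRoot μ) := by
    refine ⟨exists_pair_ne _, mul_comm, ?_⟩
    intro a ha
    rcases hpow a with h | ⟨i, hi⟩
    · exact absurd h ha
    · refine ⟨((u ^ i)⁻¹ : (AdjoinRoot μ)ˣ), ?_⟩
      have ha2 : a = ((u ^ i : (AdjoinRoot μ)ˣ) : AdjoinRoot μ) := by
        rw [hi, Units.val_pow_eq_pow_val, huval]
      rw [ha2, ← Units.val_mul]
      simp
  have hirr : Irreducible μ := by
    letI : Field (AdjoinRoot μ) := hfield.toField
    refine ⟨Polynomial.not_isUnit_of_natDegree_pos μ (by omega), ?_⟩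
    intro a b hab
    have h0 : aeval r μ = 0 := by
      rw [AdjoinRoot.aeval_eq, AdjoinRoot.mk_self]
    have h0' : aeval r a * aeval r b = 0 := by rw [← map_mul, ← hab]; exact h0
    rcases mul_eq_zero.mp h0' with h | h
    · right
      have hdva : μ ∣ a := AdjoinRoot.mk_eq_zero.mp (by rwa [← AdjoinRoot.aeval_eq])
      obtain ⟨c, hc⟩ := hdva
      rw [hc, mul_assoc] at hab
      have h1 : (1 : F[X]) = c * b :=
        mul_left_cancel₀ hμ0 (show μ * 1 = μ * (c * b) by rw [mul_one]; exact hab)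
      exact IsUnit.of_mul_eq_one c (by rw [mul_comm]; exact h1.symm)
    · left
      have hdvb : μ ∣ b := AdjoinRoot.mk_eq_zero.mp (by rwa [← AdjoinRoot.aeval_eq])
      obtain ⟨c, hc⟩ := hdvb
      rw [hc] at hab
      have h1 : (1 : F[X]) = a * c :=
        mul_left_cancel₀ hμ0 (show μ * 1 = μ * (a * c) by rw [mul_one]; nth_rewrite 1 [hab]; ring)
      exact IsUnit.of_mul_eq_one c h1.symm
  exact ⟨hdeg, hirr, horder, hpow, hfield⟩

/-- Two square matrices annihilated by the same irreducible polynomial of degree equal to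
the matrix size are conjugate. -/
theorem conj_of_aeval_eq_zero {F : Type*} [Field F] {n : ℕ} (hn : 1 ≤ n) {μ : F[X]}
    (hirr : Irreducible μ) (hdeg : μ.natDegree = n) (A B : Matrix (Fin n) (Fin n) F)
    (hA : aeval A μ = 0) (hB : aeval B μ = 0) :
    ∃ u : (Matrix (Fin n) (Fin n) F)ˣ, B = u.val * A * (u⁻¹).val := by
  haveI : Fact (Irreducible μ) := ⟨hirr⟩
  have hμ0 : μ ≠ 0 := hirr.ne_zero
  have hfinK : FiniteDimensional F (AdjoinRoot μ) :=
    Module.Finite.of_basis (AdjoinRoot.powerBasis hμ0).basis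
  have hfrK : Module.finrank F (AdjoinRoot μ) = n := by
    rw [(AdjoinRoot.powerBasis hμ0).finrank, AdjoinRoot.powerBasis_dim, hdeg]
  have hfrV : Module.finrank F (Fin n → F) = n := by
    rw [Module.finrank_pi, Fintype.card_fin]
  set v : Fin n → F := fun _ => 1 with hv
  have hv0 : v ≠ 0 := by
    intro h
    have := congrFun h ⟨0, hn⟩
    simp [hv] at this
  have main : ∀ (C : Matrix (Fin n) (Fin n) F), aeval C μ = 0 →
      ∃ E : (AdjoinRoot μ) ≃ₗ[F] (Fin n → F),
        ∀ x : AdjoinRoot μ, C.mulVec (E x) = E (AdjoinRoot.root μ * x) := by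
    intro C hC
    have hker : ∀ p ∈ Ideal.span ({μ} : Set F[X]), (aeval C).toRingHom p = 0 := by
      intro p hp
      rw [Ideal.mem_span_singleton] at hp
      obtain ⟨c, rfl⟩ := hp
      show aeval C (μ * c) = 0
      rw [map_mul, hC, zero_mul]
    set φ : AdjoinRoot μ →+* Matrix (Fin n) (Fin n) F :=
      Ideal.Quotient.lift _ (aeval C).toRingHom hker with hφ
    have hφmk : ∀ p : F[X], φ (AdjoinRoot.mk μ p) = aeval C p := fun p =>
      Ideal.Quotient.lift_mk _ _ _
    have hφroot : φ (AdjoinRoot.root μ) = C := by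
      rw [AdjoinRoot.root, hφmk, aeval_X]
    have hφalg : ∀ c : F, φ (algebraMap F (AdjoinRoot μ) c) = algebraMap F _ c := by
      intro c
      rw [AdjoinRoot.algebraMap_eq]
      show φ (AdjoinRoot.mk μ (Polynomial.C c)) = _
      rw [hφmk, aeval_C]
    have hφsmul : ∀ (c : F) (x : AdjoinRoot μ), φ (c • x) = c • φ x := by
      intro c x
      rw [Algebra.smul_def, map_mul, hφalg, ← Algebra.smul_def]
    set e : AdjoinRoot μ →ₗ[F] (Fin n → F) :=
      { toFun := fun x => (φ x).mulVec v
        map_add' := by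
          intro x y
          rw [map_add, Matrix.add_mulVec]
        map_smul' := by
          intro c x
          rw [hφsmul, Matrix.smul_mulVec]
          rfl } with he
    have hinj : Function.Injective e := by
      rw [injective_iff_map_eq_zero]
      intro x hx
      by_contra hx0
      have hxu : x⁻¹ * x = 1 := inv_mul_cancel₀ hx0
      have hv' : v = 0 := by
        have h1 : (φ (x⁻¹ * x)).mulVec v = v := by rw [hxu, map_one, Matrix.one_mulVec]
        rw [map_mul, ← Matrix.mulVec_mulVec] at h1
        have h2 : (φ x).mulVec v = 0 := hx
        rw [h2, Matrix.mulVec_zero] at h1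
        exact h1.symm
      exact hv0 hv'
    have hsurj : Function.Surjective e :=
      (LinearMap.injective_iff_surjective_of_finrank_eq_finrank
        (by rw [hfrK, hfrV])).mp hinj
    refine ⟨LinearEquiv.ofBijective e ⟨hinj, hsurj⟩, ?_⟩
    intro x
    show C.mulVec ((φ x).mulVec v) = (φ (AdjoinRoot.root μ * x)).mulVec v
    rw [map_mul, hφroot, ← Matrix.mulVec_mulVec]
  obtain ⟨EA, hEA⟩ := main A hA
  obtain ⟨EB, hEB⟩ := main B hB
  set E : (Fin n → F) ≃ₗ[F] (Fin n → F) := EA.symm.trans EB with hE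
  have hEw : ∀ w : Fin n → F, B.mulVec (E w) = E (A.mulVec w) := by
    intro w
    have hw : w = EA (EA.symm w) := (EA.apply_symm_apply w).symm
    calc B.mulVec (E w) = B.mulVec (EB (EA.symm w)) := rfl
    _ = EB (AdjoinRoot.root μ * EA.symm w) := hEB _
    _ = E (EA (AdjoinRoot.root μ * EA.symm w)) := by
        rw [hE]; simp [LinearEquiv.trans_apply]
    _ = E (A.mulVec (EA (EA.symm w))) := by rw [hEA]
    _ = E (A.mulVec w) := by rw [← hw]
  set P : Matrix (Fin n) (Fin n) F := LinearMap.toMatrix' (E : (Fin n → F) →ₗ[F] (Fin n → F))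
    with hP
  set P' : Matrix (Fin n) (Fin n) F :=
    LinearMap.toMatrix' (E.symm : (Fin n → F) →ₗ[F] (Fin n → F)) with hP'
  have hPP' : P * P' = 1 := by
    rw [hP, hP', ← LinearMap.toMatrix'_comp]
    have : (E : (Fin n → F) →ₗ[F] (Fin n → F)).comp (E.symm : (Fin n → F) →ₗ[F] (Fin n → F))
        = LinearMap.id := by
      ext w : 1
      simp
    rw [this, LinearMap.toMatrix'_id]
  have hP'P : P' * P = 1 := by
    rw [hP, hP', ← LinearMap.toMatrix'_comp]
    have : (E.symm : (Fin n → F) →ₗ[F] (Fin n → F)).comp (E : (Fin n → F) →ₗ[F] (Fin n → F))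
        = LinearMap.id := by
      ext w : 1
      simp
    rw [this, LinearMap.toMatrix'_id]
  have hcomm : B * P = P * A := by
    have h1 : (Matrix.toLin' B).comp (E : (Fin n → F) →ₗ[F] (Fin n → F))
        = (E : (Fin n → F) →ₗ[F] (Fin n → F)).comp (Matrix.toLin' A) := by
      apply LinearMap.ext
      intro w
      simp only [LinearMap.comp_apply, Matrix.toLin'_apply]
      exact hEw w
    have h2 := congrArg LinearMap.toMatrix' h1
    rw [LinearMap.toMatrix'_comp, LinearMap.toMatrix'_comp, LinearMap.toMatrix'_toLin',
      LinearMap.toMatrix'_toLin'] at h2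
    rw [← hP] at h2
    exact h2
  refine ⟨⟨P, P', hPP', hP'P⟩, ?_⟩
  show B = P * A * P'
  rw [← hcomm, mul_assoc, hPP', mul_one]

/-- An irreducible-type polynomial `μ₁` of degree `n` whose `AdjoinRoot`-root has order dividing
`q^n - 1` has a root in the field `AdjoinRoot μ₂` of cardinality `q^n`. -/
theorem exists_root_in_adjoin {F : Type*} [Field F] [Fintype F] {n : ℕ} (hn : 1 ≤ n)
    {μ₁ μ₂ : F[X]} (hμ₁0 : μ₁ ≠ 0) (hμ₂0 : μ₂ ≠ 0)
    (hd₁ : μ₁.natDegree = n) (hd₂ : μ₂.natDegree = n)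
    (hr₁ : AdjoinRoot.root μ₁ ^ (Fintype.card F ^ n - 1) = 1)
    (hfield₂ : IsField (AdjoinRoot μ₂))
    (hpow₂ : ∀ a : AdjoinRoot μ₂, a = 0 ∨ ∃ i : ℕ, a = AdjoinRoot.root μ₂ ^ i)
    (hr₂ : AdjoinRoot.root μ₂ ^ (Fintype.card F ^ n - 1) = 1) :
    ∃ ρ : AdjoinRoot μ₂, aeval ρ μ₁ = 0 := by
  classical
  set q := Fintype.card F with hqdef
  have hq2 : 2 ≤ q := Fintype.one_lt_card
  have hqn2 : 2 ≤ q ^ n := le_trans hq2 (Nat.le_self_pow (by omega) q)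
  set N := q ^ n - 1 with hNdef
  have hN1 : 1 ≤ N := by omega
  have hNq : N + 1 = q ^ n := by omega
  letI : Field (AdjoinRoot μ₂) := hfield₂.toField
  have hpowall : ∀ a : AdjoinRoot μ₂, a ^ (q ^ n) = a := by
    intro a
    rcases hpow₂ a with h | ⟨i, hi⟩
    · rw [h]
      exact zero_pow (by omega)
    · have hroot : AdjoinRoot.root μ₂ ^ (q ^ n) = AdjoinRoot.root μ₂ := by
        rw [← hNq, pow_succ, hr₂, one_mul]
      rw [hi, ← pow_right_comm, hroot]
  have hdvd : μ₁ ∣ (X : F[X]) ^ (q ^ n) - X := by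
    apply AdjoinRoot.mk_eq_zero.mp
    rw [← AdjoinRoot.aeval_eq]
    have hroot1 : AdjoinRoot.root μ₁ ^ (q ^ n) = AdjoinRoot.root μ₁ := by
      rw [← hNq, pow_succ, hr₁, one_mul]
    simp [hroot1]
  obtain ⟨c, hc⟩ := hdvd
  by_contra hcon
  push_neg at hcon
  have hceval : ∀ a : AdjoinRoot μ₂, aeval a c = 0 := by
    intro a
    have h1 : aeval a ((X : F[X]) ^ (q ^ n) - X) = 0 := by
      simp [hpowall a]
    rw [hc, map_mul] at h1
    rcases mul_eq_zero.mp h1 with h | h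
    · exact absurd h (hcon a)
    · exact h
  have hXdeg : ((X : F[X]) ^ (q ^ n) - X).natDegree = q ^ n := by
    rw [natDegree_sub_eq_left_of_natDegree_lt, natDegree_X_pow]
    rw [natDegree_X_pow, natDegree_X]
    omega
  have hc0 : c ≠ 0 := by
    intro h
    rw [h, mul_zero] at hc
    rw [hc, natDegree_zero] at hXdeg
    omega
  have hcdeg : c.natDegree = q ^ n - n := by
    have h1 := hXdeg
    rw [hc, natDegree_mul hμ₁0 hc0, hd₁] at h1
    omega
  letI : Fintype (AdjoinRoot μ₂) := Module.fintypeOfFintype (AdjoinRoot.powerBasis hμ₂0).basis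
  have hcardA : Fintype.card (AdjoinRoot μ₂) = q ^ n := by
    rw [Module.card_fintype (AdjoinRoot.powerBasis hμ₂0).basis, Fintype.card_fin,
      AdjoinRoot.powerBasis_dim, hd₂]
  have hc'0 : c.map (algebraMap F (AdjoinRoot μ₂)) = 0 := by
    apply Polynomial.eq_zero_of_natDegree_lt_card_of_eval_eq_zero'
      (c.map (algebraMap F (AdjoinRoot μ₂))) Finset.univ
    · intro a _
      rw [eval_map, ← aeval_def]
      exact hceval a
    · calc (c.map (algebraMap F (AdjoinRoot μ₂))).natDegree ≤ c.natDegree :=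
        natDegree_map_le
      _ < Finset.univ.card := by
          rw [Finset.card_univ, hcardA, hcdeg]
          omega
  have : c = 0 := by
    have hinj : Function.Injective (algebraMap F (AdjoinRoot μ₂)) :=
      (algebraMap F (AdjoinRoot μ₂)).injective
    exact (Polynomial.map_eq_zero_iff hinj).mp hc'0
  exact hc0 this
theorem conjS_zpowers {G : Type*} [Group G] (a x : G) :
    conjS (Subgroup.zpowers a) x = Subgroup.zpowers (x⁻¹ * a * x) := by
  have key : ∀ k : ℤ, (x⁻¹ * a * x) ^ k = x⁻¹ * a ^ k * x := by
    intro k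
    have h1 : x⁻¹ * a * x = (MulAut.conj x⁻¹) a := by
      simp [MulAut.conj_apply]
    rw [h1, ← map_zpow]
    simp [MulAut.conj_apply]
  ext h
  simp only [conjS, Subgroup.mem_comap, MulEquiv.toMonoidHom_eq_coe, MonoidHom.coe_coe,
    MulAut.conj_apply, Subgroup.mem_zpowers_iff]
  constructor
  · rintro ⟨k, hk⟩
    refine ⟨k, ?_⟩
    rw [key k, hk]
    group
  · rintro ⟨k, hk⟩
    refine ⟨k, ?_⟩
    rw [← hk, key k]
    group

/-- Any two Singer cycles of `GL_n(q)`, i.e. cyclic subgroups of order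
`q^n - 1`, are conjugate in `GL_n(q)`. -/
theorem singer_cycles_conjugate {F : Type*} [Field F] [Fintype F] {n : ℕ} (hn : 1 ≤ n)
    (T₁ T₂ : Subgroup (GLn n F)) (h₁c : IsCyclic T₁) (h₂c : IsCyclic T₂)
    (h₁card : Nat.card T₁ = Fintype.card F ^ n - 1)
    (h₂card : Nat.card T₂ = Fintype.card F ^ n - 1) :
    ∃ x : GLn n F, conjS T₁ x = T₂ := by
  classical
  haveI : Nonempty (Fin n) := ⟨⟨0, hn⟩⟩
  set q := Fintype.card F with hqdef
  have hq2 : 2 ≤ q := Fintype.one_lt_card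
  have hqn2 : 2 ≤ q ^ n := le_trans hq2 (Nat.le_self_pow (by omega) q)
  set N := q ^ n - 1 with hNdef
  have hN1 : 1 ≤ N := by omega
  have hNq : N + 1 = q ^ n := by omega
  haveI : Finite (GLn n F) := inferInstance
  -- extract generators
  obtain ⟨g₁', hg₁'⟩ := h₁c.exists_generator
  obtain ⟨g₂', hg₂'⟩ := h₂c.exists_generator
  set g₁ : GLn n F := (g₁' : GLn n F) with hg₁def
  set g₂ : GLn n F := (g₂' : GLn n F) with hg₂def
  have hT : ∀ (T : Subgroup (GLn n F)) (g' : T) (_ : ∀ y : T, y ∈ Subgroup.zpowers g'),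
      T = Subgroup.zpowers (g' : GLn n F) := by
    intro T g' hg'
    ext x
    constructor
    · intro hx
      obtain ⟨k, hk⟩ := Subgroup.mem_zpowers_iff.mp (hg' ⟨x, hx⟩)
      refine Subgroup.mem_zpowers_iff.mpr ⟨k, ?_⟩
      have := congrArg (T.subtype) hk
      simpa using this
    · intro hx
      obtain ⟨k, hk⟩ := Subgroup.mem_zpowers_iff.mp hx
      rw [← hk]
      exact Subgroup.zpow_mem T g'.2 k
  have hT₁ : T₁ = Subgroup.zpowers g₁ := hT T₁ g₁' hg₁'
  have hT₂ : T₂ = Subgroup.zpowers g₂ := hT T₂ g₂' hg₂'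
  have hgord : ∀ (T : Subgroup (GLn n F)) (g' : T) (_ : ∀ y : T, y ∈ Subgroup.zpowers g')
      (_ : Nat.card T = N), orderOf (g' : GLn n F) = N := by
    intro T g' hg' hcard
    have h1 : orderOf g' = N := by
      rw [← Nat.card_zpowers, (Subgroup.zpowers g').eq_top_iff'.mpr hg', ← hcard]
      exact Subgroup.card_top
    rw [← h1]
    exact orderOf_injective T.subtype T.subtype_injective g'
  have hg₁ord : orderOf g₁ = N := hgord T₁ g₁' hg₁' h₁card
  have hg₂ord : orderOf g₂ = N := hgord T₂ g₂' hg₂' h₂card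
  -- matrices
  set M₁ : Matrix (Fin n) (Fin n) F := (g₁ : Matrix (Fin n) (Fin n) F) with hM₁def
  set M₂ : Matrix (Fin n) (Fin n) F := (g₂ : Matrix (Fin n) (Fin n) F) with hM₂def
  have hM₁ord : orderOf M₁ = N := by rw [hM₁def, orderOf_units]; exact hg₁ord
  have hM₂ord : orderOf M₂ = N := by rw [hM₂def, orderOf_units]; exact hg₂ord
  obtain ⟨hdeg₁, hirr₁, hrord₁, hpow₁, hfield₁⟩ := singer_matrix_facts hn M₁ hM₁ord
  obtain ⟨hdeg₂, hirr₂, hrord₂, hpow₂, hfield₂⟩ := singer_matrix_facts hn M₂ hM₂ord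
  simp only [← hqdef, ← hNdef] at hrord₁ hrord₂
  set μ₁ := minpoly F M₁ with hμ₁def
  set μ₂ := minpoly F M₂ with hμ₂def
  have hint₁ : IsIntegral F M₁ := IsIntegral.of_finite F M₁
  have hμ₁0 : μ₁ ≠ 0 := minpoly.ne_zero hint₁
  have hμ₂0 : μ₂ ≠ 0 := minpoly.ne_zero (IsIntegral.of_finite F M₂)
  have hmonic₁ : μ₁.Monic := minpoly.monic hint₁
  have hr₁N : AdjoinRoot.root μ₁ ^ N = 1 := by rw [← hrord₁]; exact pow_orderOf_eq_one _
  have hr₂N : AdjoinRoot.root μ₂ ^ N = 1 := by rw [← hrord₂]; exact pow_orderOf_eq_one _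
  have hMN₁ : M₁ ^ N = 1 := by rw [← hM₁ord]; exact pow_orderOf_eq_one M₁
  have hMN₂ : M₂ ^ N = 1 := by rw [← hM₂ord]; exact pow_orderOf_eq_one M₂
  -- a root of μ₁ in the splitting field AdjoinRoot μ₂
  obtain ⟨ρ, hρ⟩ := exists_root_in_adjoin hn hμ₁0 hμ₂0 hdeg₁ hdeg₂ hr₁N hfield₂ hpow₂ hr₂N
  letI : Field (AdjoinRoot μ₂) := hfield₂.toField
  have hdvd₁N : μ₁ ∣ (X : F[X]) ^ N - 1 := by
    apply minpoly.dvd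
    simp [hMN₁]
  have hρ0 : ρ ≠ 0 := by
    rintro rfl
    have h2 : aeval (0 : AdjoinRoot μ₂) μ₁ = algebraMap F _ (μ₁.coeff 0) := by
      rw [aeval_def, eval₂_at_zero]
    have h1 : μ₁.coeff 0 = 0 := by
      apply (algebraMap F (AdjoinRoot μ₂)).injective
      rw [← h2, hρ, map_zero]
    have h4 : (X : F[X]) ∣ (X : F[X]) ^ N - 1 := (X_dvd_iff.mpr h1).trans hdvd₁N
    have h5 : ((X : F[X]) ^ N - 1).coeff 0 = 0 := X_dvd_iff.mp h4
    have h6 : ((X : F[X]) ^ N - 1).coeff 0 = -1 := by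
      rw [coeff_sub, coeff_X_pow, coeff_one]
      simp [(show ¬ (0 : ℕ) = N by omega)]
    rw [h6] at h5
    exact one_ne_zero (neg_eq_zero.mp h5)
  obtain ⟨i, hi⟩ := (hpow₂ ρ).resolve_left hρ0
  -- minimal polynomial of ρ is μ₁
  have hminρ : minpoly F ρ = μ₁ := (minpoly.eq_of_irreducible_of_monic hirr₁ hρ hmonic₁).symm
  have hρN : ρ ^ N = 1 := by
    rw [hi, ← pow_right_comm, hr₂N, one_pow]
  have hρord : orderOf ρ = N := by
    have h1 : orderOf ρ ∣ N := orderOf_dvd_of_pow_eq_one hρN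
    have h2 : N ∣ orderOf ρ := by
      have hdvd2 : μ₁ ∣ (X : F[X]) ^ orderOf ρ - 1 := by
        rw [← hminρ]
        apply minpoly.dvd
        simp [pow_orderOf_eq_one]
      obtain ⟨c, hc⟩ := hdvd2
      have hz : aeval M₁ ((X : F[X]) ^ orderOf ρ - 1) = 0 := by
        rw [hc, map_mul, minpoly.aeval, zero_mul]
      have hz2 : M₁ ^ orderOf ρ = 1 := by
        have := sub_eq_zero.mp (by simpa using hz)
        simpa using this
      rw [← hM₁ord]
      exact orderOf_dvd_of_pow_eq_one hz2
    exact Nat.dvd_antisymm h1 h2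
  -- the matrix R = M₂ ^ i
  set R : Matrix (Fin n) (Fin n) F := M₂ ^ i with hRdef
  have hRord : orderOf R = N := by
    have h1 : orderOf R ∣ N := by
      apply orderOf_dvd_of_pow_eq_one
      rw [hRdef, ← pow_right_comm, hMN₂, one_pow]
    have h2 : N ∣ orderOf R := by
      have hj : M₂ ^ (i * orderOf R) = 1 := by
        rw [pow_mul, ← hRdef]
        exact pow_orderOf_eq_one R
      have hNij : N ∣ i * orderOf R := by
        rw [← hM₂ord]
        exact orderOf_dvd_of_pow_eq_one hj
      obtain ⟨m, hm⟩ := hNij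
      have hρj : ρ ^ orderOf R = 1 := by
        rw [hi, ← pow_mul, hm, pow_mul, hr₂N, one_pow]
      rw [← hρord]
      exact orderOf_dvd_of_pow_eq_one hρj
    exact Nat.dvd_antisymm h1 h2
  have hRa : aeval R μ₁ = 0 := by
    have hdvdc : μ₂ ∣ μ₁.comp ((X : F[X]) ^ i) := by
      apply AdjoinRoot.mk_eq_zero.mp
      rw [← AdjoinRoot.aeval_eq, aeval_comp]
      have : aeval (AdjoinRoot.root μ₂) ((X : F[X]) ^ i) = ρ := by
        rw [map_pow, aeval_X, ← hi]
      rw [this, hρ]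
    obtain ⟨c, hc⟩ := hdvdc
    have hz : aeval M₂ (μ₁.comp ((X : F[X]) ^ i)) = 0 := by
      rw [hc, map_mul, minpoly.aeval, zero_mul]
    rw [aeval_comp] at hz
    have : aeval M₂ ((X : F[X]) ^ i) = R := by rw [map_pow, aeval_X, hRdef]
    rwa [this] at hz
  -- conjugate M₁ to R
  obtain ⟨u, hu⟩ := conj_of_aeval_eq_zero hn hirr₁ hdeg₁ M₁ R (minpoly.aeval F M₁) hRa
  -- the unit g₂ ^ i
  set G₂ : GLn n F := g₂ ^ i with hG₂def
  have hG₂val : (G₂ : Matrix (Fin n) (Fin n) F) = R := by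
    rw [hG₂def, Units.val_pow_eq_pow_val, hRdef]
  have hG₂ord : orderOf G₂ = N := by
    rw [← orderOf_units, hG₂val, hRord]
  have hG₂T₂ : Subgroup.zpowers G₂ = T₂ := by
    have hle : Subgroup.zpowers G₂ ≤ T₂ := by
      rw [hT₂]
      apply Subgroup.zpowers_le.mpr
      exact Subgroup.zpow_mem _ (Subgroup.mem_zpowers g₂) i
    apply Subgroup.eq_of_le_of_card_ge hle
    rw [h₂card, Nat.card_zpowers, hG₂ord]
  -- assemble
  have hgu : g₁ = u⁻¹ * G₂ * u := by
    apply Units.ext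
    rw [Units.val_mul, Units.val_mul, hG₂val, hu]
    show M₁ = ((u⁻¹ : GLn n F) : Matrix (Fin n) (Fin n) F) * ((u : Matrix (Fin n) (Fin n) F) * M₁ * ((u⁻¹ : GLn n F) : Matrix (Fin n) (Fin n) F)) * (u : Matrix (Fin n) (Fin n) F)
    rw [← mul_assoc, ← mul_assoc, ← Units.val_mul, inv_mul_cancel]  -- check names
    rw [Units.val_one, one_mul, mul_assoc, ← Units.val_mul, inv_mul_cancel, Units.val_one, mul_one]
  refine ⟨u⁻¹, ?_⟩
  rw [hT₁, conjS_zpowers]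
  have hx : (u⁻¹ : GLn n F)⁻¹ * g₁ * u⁻¹ = G₂ := by
    rw [hgu]
    group
  rw [hx, hG₂T₂]
end

section
/- Let G ≤ Sym(Ω) be a nontrivial finite group acting faithfully and transitively on a finite set Ω. For x ∈ G let fpr(x) = |{ω ∈ Ω : ωx = ω}|/|Ω|, and for t ∈ ℝ let η_G(t) = Σ_C |C|^{−t}, the sum over all conjugacy classes C of G consisting of elements of prime order. Let ξ ∈ ℝ and c a positive integer, and suppose fpr(x) ≤ |x^G|^{−ξ} for every element x ∈ G of prime order. If T ∈ ℝ satisfies η_G(T) = 1 and T < cξ − 1, then G has a base of size c, i.e. b(G) ≤ c. -/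
/-- The base size of the action of `G` on `Ω`: the least `k` such that some `k`-tuple
of points of `Ω` has trivial pointwise stabiliser in `G`. -/
noncomputable def actionBaseSize (G : Type*) (Ω : Type*) [Group G] [MulAction G Ω] : ℕ :=
  sInf {k : ℕ | ∃ s : Fin k → Ω, ∀ g : G, (∀ i, g • s i = s i) → g = 1}

/-- The fixed point ratio of `x`: the proportion of points of `Ω` fixed by `x`. -/
noncomputable def fpr (G : Type*) (Ω : Type*) [Group G] [MulAction G Ω] (x : G) : ℝ :=
  (Nat.card {ω : Ω // x • ω = ω} : ℝ) / (Nat.card Ω : ℝ)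

/-- The size `|x^G|` of the conjugacy class of `x`. -/
noncomputable def classSize {G : Type*} [Group G] (x : G) : ℕ :=
  Nat.card (ConjClasses.mk x).carrier

/-- `η_G(t) = Σ_C |C|^(−t)`, the sum over all conjugacy classes `C` of `G` consisting of
elements of prime order. -/
noncomputable def etaG (G : Type*) [Group G] (t : ℝ) : ℝ :=
  ∑ᶠ c ∈ {c : ConjClasses G | ∃ x : G, ConjClasses.mk x = c ∧ (orderOf x).Prime},
    (Nat.card (ConjClasses.carrier c) : ℝ) ^ (-t)

open Finset

section aux
variable {G : Type*} [Group G] [Finite G]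

lemma exists_pow_prime_order (g : G) (hg : g ≠ 1) :
    ∃ k : ℕ, (orderOf (g ^ k)).Prime := by
  have hn : orderOf g ≠ 1 := by simpa using hg
  obtain ⟨p, hp, hpd⟩ := Nat.exists_prime_and_dvd hn
  refine ⟨orderOf g / p, ?_⟩
  have hpos : 0 < orderOf g := orderOf_pos g
  rw [orderOf_pow, Nat.gcd_eq_right (Nat.div_dvd_of_dvd hpd),
    Nat.div_div_self hpd hpos.ne']
  exact hp

-- class size positive
lemma classSize_pos (x : G) : 0 < classSize x := by
  have : x ∈ (ConjClasses.mk x).carrier := ConjClasses.mem_carrier_mk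
  have hfin : (ConjClasses.mk x).carrier.Finite := Set.toFinite _
  exact Nat.card_pos_iff.mpr ⟨⟨x, this⟩, hfin.to_subtype⟩

-- class size one means central
lemma central_of_classSize_one {x : G} (h : classSize x = 1) (g : G) : g * x = x * g := by
  have hx : x ∈ (ConjClasses.mk x).carrier := ConjClasses.mem_carrier_mk
  have hgx : g * x * g⁻¹ ∈ (ConjClasses.mk x).carrier := by
    rw [ConjClasses.mem_carrier_iff_mk_eq, ConjClasses.mk_eq_mk_iff_isConj]
    exact isConj_iff.mpr ⟨g⁻¹, by group⟩
  obtain ⟨⟨a, _⟩, ha⟩ := Nat.card_eq_one_iff_exists.mp h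
  have h1 : (⟨g * x * g⁻¹, hgx⟩ : (ConjClasses.mk x).carrier) = ⟨a, ‹_›⟩ := ha _
  have h2 : (⟨x, hx⟩ : (ConjClasses.mk x).carrier) = ⟨a, ‹_›⟩ := ha _
  have : g * x * g⁻¹ = x := by
    have := h1.trans h2.symm
    simpa using congrArg Subtype.val this
  calc g * x = (g * x * g⁻¹) * g := by group
    _ = x * g := by rw [this]

lemma orderOf_eq_of_mk_eq {x y : G} (h : ConjClasses.mk x = ConjClasses.mk y) :
    orderOf x = orderOf y := by
  rw [ConjClasses.mk_eq_mk_iff_isConj] at h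
  obtain ⟨u, hu⟩ := h
  exact SemiconjBy.orderOf_eq _ hu

end aux

/-- Suppose the nontrivial finite group `G` acts faithfully and
transitively on the finite set `Ω`, `fpr(x) ≤ |x^G|^(−ξ)` for every `x ∈ G` of prime
order, and `T` satisfies `η_G(T) = 1` and `T < cξ − 1`.  Then `G` has a base of size
`c`, i.e. `b(G) ≤ c`. -/
theorem base_of_fpr_bound (G Ω : Type*) [Group G] [Finite G] [Nontrivial G]
    [Fintype Ω] [MulAction G Ω] [FaithfulSMul G Ω]
    (htrans : MulAction.IsPretransitive G Ω)
    (ξ T : ℝ) (c : ℕ) (hc : 0 < c)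
    (hfpr : ∀ x : G, (orderOf x).Prime → fpr G Ω x ≤ (classSize x : ℝ) ^ (-ξ))
    (hT : etaG G T = 1) (hTc : T < c * ξ - 1) :
    actionBaseSize G Ω ≤ c := by
  classical
  have : Fintype G := Fintype.ofFinite G
  -- Ω is nonempty
  have hΩne : Nonempty Ω := by
    by_contra h
    rw [not_nonempty_iff] at h
    obtain ⟨a, b, hab⟩ := exists_pair_ne G
    exact hab (eq_of_smul_eq_smul (fun ω : Ω => (h.false ω).elim))
  have hΩpos : (0 : ℝ) < (Fintype.card Ω : ℝ) := by
    exact_mod_cast Fintype.card_pos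
  set P : Finset G := {x : G | (orderOf x).Prime} with hP
  have hmemP : ∀ x : G, x ∈ P ↔ (orderOf x).Prime := by
    intro x; simp [hP]
  -- P is nonempty
  obtain ⟨g₀, hg₀⟩ := exists_ne (1 : G)
  obtain ⟨k₀, hk₀⟩ := exists_pow_prime_order g₀ hg₀
  have hPne : P.Nonempty := ⟨g₀ ^ k₀, (hmemP _).mpr hk₀⟩
  -- the fixed-point finset of x
  set Fix : G → Finset Ω := fun x => {ω : Ω | x • ω = ω} with hFix
  have hFixcard : ∀ x : G, (Nat.card {ω : Ω // x • ω = ω} : ℝ) = ((Fix x).card : ℝ) := by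
    intro x
    rw [Nat.card_eq_fintype_card, Fintype.card_subtype]
  -- Step A: per-element strict bound
  have stepA : ∀ x ∈ P, ((Fix x).card : ℝ) ^ c <
      (Fintype.card Ω : ℝ) ^ c * (classSize x : ℝ) ^ (-(1 + T)) := by
    intro x hx
    rw [hmemP] at hx
    have hx1 : x ≠ 1 := by
      intro h; rw [h] at hx; exact Nat.not_prime_one (by simpa using hx)
    have ha1 : (1 : ℝ) ≤ (classSize x : ℝ) := by exact_mod_cast classSize_pos x
    rcases eq_or_lt_of_le (show 1 ≤ classSize x from classSize_pos x) with h1 | h2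
    · -- classSize = 1 : x is central, so Fix x = ∅
      have hcs : classSize x = 1 := h1.symm
      have hFixempty : Fix x = ∅ := by
        by_contra hne
        obtain ⟨ω, hω⟩ := Finset.nonempty_of_ne_empty hne
        have hωfix : x • ω = ω := by simpa [hFix] using hω
        have : ∀ ω' : Ω, x • ω' = ω' := by
          intro ω'
          obtain ⟨g, rfl⟩ := htrans.exists_smul_eq ω ω'
          have hcomm := central_of_classSize_one hcs g
          calc x • g • ω = (x * g) • ω := (mul_smul _ _ _).symm
            _ = (g * x) • ω := by rw [hcomm]
            _ = g • (x • ω) := mul_smul _ _ _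
            _ = g • ω := by rw [hωfix]
        exact hx1 (eq_of_smul_eq_smul (fun ω' : Ω => by rw [this ω', one_smul]))
      rw [hFixempty, hcs]
      simp only [Finset.card_empty, Nat.cast_zero, Nat.cast_one, Real.one_rpow, mul_one]
      rw [zero_pow hc.ne']
      exact pow_pos hΩpos c
    · -- classSize ≥ 2
      have ha : (1 : ℝ) < (classSize x : ℝ) := by exact_mod_cast h2
      have ha0 : (0 : ℝ) < (classSize x : ℝ) := lt_trans one_pos ha
      have hfx := hfpr x hx
      have hfnn : 0 ≤ fpr G Ω x := by
        unfold fpr; positivity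
      have key : fpr G Ω x ^ c < (classSize x : ℝ) ^ (-(1 + T)) := by
        have h1 : fpr G Ω x ^ c ≤ ((classSize x : ℝ) ^ (-ξ)) ^ c :=
          pow_le_pow_left₀ hfnn hfx c
        have h2 : ((classSize x : ℝ) ^ (-ξ)) ^ c = (classSize x : ℝ) ^ (-ξ * c) := by
          rw [← Real.rpow_natCast ((classSize x : ℝ) ^ (-ξ)) c, ← Real.rpow_mul ha0.le]
        have h3 : (classSize x : ℝ) ^ (-ξ * c) < (classSize x : ℝ) ^ (-(1 + T)) := by
          rw [Real.rpow_lt_rpow_left_iff ha]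
          nlinarith
        calc fpr G Ω x ^ c ≤ ((classSize x : ℝ) ^ (-ξ)) ^ c := h1
          _ = (classSize x : ℝ) ^ (-ξ * c) := h2
          _ < _ := h3
      have hfprval : ((Fix x).card : ℝ) = fpr G Ω x * (Fintype.card Ω : ℝ) := by
        unfold fpr
        rw [hFixcard x, Nat.card_eq_fintype_card]
        field_simp
      rw [hfprval, mul_pow]
      calc fpr G Ω x ^ c * (Fintype.card Ω : ℝ) ^ c
          < (classSize x : ℝ) ^ (-(1 + T)) * (Fintype.card Ω : ℝ) ^ c := by
            apply mul_lt_mul_of_pos_right key (pow_pos hΩpos c)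
        _ = (Fintype.card Ω : ℝ) ^ c * (classSize x : ℝ) ^ (-(1 + T)) := mul_comm _ _
  -- Step B: sum over P of classSize^{-(1+T)} equals etaG G T = 1
  have stepB : ∑ x ∈ P, (classSize x : ℝ) ^ (-(1 + T)) = 1 := by
    unfold classSize
    have := Finset.sum_comp (fun C : ConjClasses G =>
      (Nat.card (ConjClasses.carrier C) : ℝ) ^ (-(1 + T))) (ConjClasses.mk (α := G))
      (s := P)
    have hfib : ∀ C ∈ P.image ConjClasses.mk,
        ({a ∈ P | ConjClasses.mk a = C} : Finset G).card = Nat.card (ConjClasses.carrier C) := by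
      intro C hC
      obtain ⟨x₀, hx₀P, rfl⟩ := Finset.mem_image.mp hC
      rw [hmemP] at hx₀P
      have : ({a ∈ P | ConjClasses.mk a = ConjClasses.mk x₀} : Finset G)
          = ({a : G | ConjClasses.mk a = ConjClasses.mk x₀} : Finset G) := by
        ext a
        constructor
        · intro h
          exact Finset.mem_filter.mpr ⟨Finset.mem_univ a, (Finset.mem_filter.mp h).2⟩
        · intro h
          have hmk : ConjClasses.mk a = ConjClasses.mk x₀ := by
            simpa using (Finset.mem_filter.mp h).2
          exact Finset.mem_filter.mpr
            ⟨(hmemP a).mpr (by rw [orderOf_eq_of_mk_eq hmk]; exact hx₀P), hmk⟩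
      rw [this]
      have hcard : Nat.card ((ConjClasses.mk x₀).carrier) =
          Nat.card {a : G // ConjClasses.mk a = ConjClasses.mk x₀} :=
        Nat.card_congr (Equiv.subtypeEquivRight
          (fun a => (ConjClasses.mem_carrier_iff_mk_eq (b := ConjClasses.mk x₀))))
      rw [hcard, Nat.card_eq_fintype_card, Fintype.card_subtype]
    rw [this]
    have step1 : ∑ C ∈ P.image ConjClasses.mk,
        ({a ∈ P | ConjClasses.mk a = C} : Finset G).card •
          (Nat.card (ConjClasses.carrier C) : ℝ) ^ (-(1 + T))
        = ∑ C ∈ P.image ConjClasses.mk, (Nat.card (ConjClasses.carrier C) : ℝ) ^ (-T) := by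
      apply Finset.sum_congr rfl
      intro C hC
      rw [hfib C hC, nsmul_eq_mul]
      have hpos : (0 : ℝ) < (Nat.card (ConjClasses.carrier C) : ℝ) := by
        obtain ⟨x₀, hx₀P, rfl⟩ := Finset.mem_image.mp hC
        exact_mod_cast classSize_pos x₀
      calc (Nat.card (ConjClasses.carrier C) : ℝ) *
            (Nat.card (ConjClasses.carrier C) : ℝ) ^ (-(1 + T))
          = (Nat.card (ConjClasses.carrier C) : ℝ) ^ (1 : ℝ) *
            (Nat.card (ConjClasses.carrier C) : ℝ) ^ (-(1 + T)) := by rw [Real.rpow_one]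
        _ = (Nat.card (ConjClasses.carrier C) : ℝ) ^ (1 + -(1 + T)) :=
            (Real.rpow_add hpos _ _).symm
        _ = (Nat.card (ConjClasses.carrier C) : ℝ) ^ (-T) := by ring_nf
    rw [step1]
    -- identify with etaG
    have hset : {c : ConjClasses G | ∃ x : G, ConjClasses.mk x = c ∧ (orderOf x).Prime}
        = ↑(P.image ConjClasses.mk) := by
      ext C
      simp only [Set.mem_setOf_eq, Finset.coe_image, Set.mem_image, Finset.mem_coe, hmemP]
      constructor
      · rintro ⟨x, h1, h2⟩; exact ⟨x, h2, h1⟩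
      · rintro ⟨x, h1, h2⟩; exact ⟨x, h2, h1⟩
    rw [← hT]
    unfold etaG
    rw [hset, finsum_mem_coe_finset]
  -- Step C: counting bad tuples
  set Bad : Finset (Fin c → Ω) := {s : Fin c → Ω | ∃ x ∈ P, ∀ i, x • s i = s i} with hBad
  have stepC : (Bad.card : ℝ) ≤ ∑ x ∈ P, ((Fix x).card : ℝ) ^ c := by
    have hsub : Bad ⊆ P.biUnion (fun x => Fintype.piFinset (fun _ : Fin c => Fix x)) := by
      intro s hs
      simp only [hBad, Finset.mem_filter, Finset.mem_univ, true_and] at hs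
      obtain ⟨x, hxP, hxs⟩ := hs
      apply Finset.mem_biUnion.mpr
      exact ⟨x, hxP, Fintype.mem_piFinset.mpr (fun i => by simp [hFix, hxs i])⟩
    calc (Bad.card : ℝ) ≤ ((P.biUnion (fun x => Fintype.piFinset (fun _ : Fin c => Fix x))).card : ℝ) := by
          exact_mod_cast Finset.card_le_card hsub
      _ ≤ (∑ x ∈ P, (Fintype.piFinset (fun _ : Fin c => Fix x)).card : ℕ) := by
          exact_mod_cast Finset.card_biUnion_le
      _ = ∑ x ∈ P, ((Fix x).card : ℝ) ^ c := by
          push_cast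
          apply Finset.sum_congr rfl
          intro x _
          rw [Fintype.card_piFinset]
          push_cast
          simp
  -- combine: Bad.card < |Ω|^c
  have main : (Bad.card : ℝ) < (Fintype.card Ω : ℝ) ^ c := by
    calc (Bad.card : ℝ) ≤ ∑ x ∈ P, ((Fix x).card : ℝ) ^ c := stepC
      _ < ∑ x ∈ P, (Fintype.card Ω : ℝ) ^ c * (classSize x : ℝ) ^ (-(1 + T)) :=
          Finset.sum_lt_sum_of_nonempty hPne stepA
      _ = (Fintype.card Ω : ℝ) ^ c * ∑ x ∈ P, (classSize x : ℝ) ^ (-(1 + T)) := by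
          rw [Finset.mul_sum]
      _ = (Fintype.card Ω : ℝ) ^ c := by rw [stepB, mul_one]
  -- extract a base
  have hBadne : Bad ≠ Finset.univ := by
    intro h
    rw [h] at main
    have : (((Finset.univ : Finset (Fin c → Ω))).card : ℝ) = (Fintype.card Ω : ℝ) ^ c := by
      rw [Finset.card_univ, Fintype.card_fun, Fintype.card_fin]
      push_cast
      ring
    rw [this] at main
    exact lt_irrefl _ main
  obtain ⟨s, hs⟩ : ∃ s : Fin c → Ω, s ∉ Bad := by
    by_contra h
    push_neg at h
    exact hBadne (Finset.eq_univ_of_forall h)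
  have hbase : ∀ g : G, (∀ i, g • s i = s i) → g = 1 := by
    intro g hg
    by_contra hg1
    obtain ⟨k, hk⟩ := exists_pow_prime_order g hg1
    apply hs
    simp only [hBad, Finset.mem_filter, Finset.mem_univ, true_and]
    have hfixpow : ∀ (n : ℕ) (i : Fin c), (g ^ n) • s i = s i := by
      intro n i
      induction n with
      | zero => simp
      | succ m ih => rw [pow_succ, mul_smul, hg i, ih]
    exact ⟨g ^ k, (hmemP _).mpr hk, fun i => hfixpow k i⟩
  exact Nat.sInf_le ⟨s, hbase⟩
end
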